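/- arXiv:2401.11525 — 7 statements merged into one kernel-verified Lean document; each statement's English description precedes it below -/
import Mathlib

section
/- If H is a non-empty graph containing a pendant edge, then the limit as n tends to infinity of rwsat(n, H)/n equals 0. -/
open SimpleGraph

/-- The edge-colored graph `(G, c)` contains a rainbow copy of `H`
passing through the edge `e`. -/
def IsRainbowCopyThrough {W V : Type*} (H : SimpleGraph W) (G : SimpleGraph V)
    (c : Sym2 V → ℕ) (e : Sym2 V) : Prop :=
  ∃ f : W → V, Function.Injective f ∧
    (∀ ⦃a b⦄, H.Adj a b → G.Adj (f a) (f b)) ∧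
    (∀ ⦃a b a' b'⦄, H.Adj a b → H.Adj a' b' →
      c s(f a, f b) = c s(f a', f b') → s(a, b) = s(a', b')) ∧
    ∃ a b, H.Adj a b ∧ e = s(f a, f b)

/-- The edge-colored graph `(G, c)` is weakly `H`-rainbow saturated: there is an
ordering `L` of the non-edges of `G` such that for every list `cs` of pairwise
distinct colors, adding the non-edges one at a time (the `i`-th one in color `cs i`)
always creates a new rainbow copy of `H` through the added edge. -/
def WeaklyRainbowSat {W V : Type*} [DecidableEq V] (H : SimpleGraph W)
    (G : SimpleGraph V) (c : Sym2 V → ℕ) : Prop :=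
  ∃ L : List (Sym2 V), L.Nodup ∧ (∀ e, e ∈ L ↔ e ∈ Gᶜ.edgeSet) ∧
    ∀ cs : List ℕ, cs.length = L.length → cs.Nodup →
      ∀ i : Fin L.length,
        IsRainbowCopyThrough H
          (G ⊔ SimpleGraph.fromEdgeSet {e | e ∈ L.take ((i : ℕ) + 1)})
          (((L.zip cs).take ((i : ℕ) + 1)).foldl
            (fun c' p => Function.update c' p.1 p.2) c)
          (L.get i)

/-- The weak rainbow saturation number `rwsat(n, H)`: the minimum number of edges
in a weakly `H`-rainbow saturated edge-colored graph on `n` vertices, where by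
convention the value is `n.choose 2` if no such graph exists. -/
noncomputable def rwsat {W : Type*} (H : SimpleGraph W) (n : ℕ) : ℕ :=
  sInf ({m | ∃ (G : SimpleGraph (Fin n)) (c : Sym2 (Fin n) → ℕ),
    WeaklyRainbowSat H G c ∧ G.edgeSet.ncard = m} ∪ {n.choose 2})

/-- `δ'(H)`: the minimum degree among vertices of nonzero degree. -/
noncomputable def minPosDeg {W : Type*} (H : SimpleGraph W) : ℕ :=
  sInf {d | ∃ v, (H.neighborSet v).ncard = d ∧ d ≠ 0}

/-- `A` is contained in `B` as a subgraph (there is an injective graph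
homomorphism from `A` to `B`). -/
def ContainsCopy {α β : Type*} (A : SimpleGraph α) (B : SimpleGraph β) : Prop :=
  ∃ f : α → β, Function.Injective f ∧ ∀ ⦃a b⦄, A.Adj a b → B.Adj (f a) (f b)

/-- The Turán number `ex(N, ℋ)` of the family `ℋ = {H - {u, v} : uv ∈ E(H)}`:
the maximum number of edges of an `N`-vertex graph containing no member of `ℋ`. -/
noncomputable def exFam {W : Type*} (H : SimpleGraph W) (N : ℕ) : ℕ :=
  sSup {m | ∃ G : SimpleGraph (Fin N),
    (∀ u v : W, H.Adj u v → ¬ ContainsCopy (H.induce ({u, v}ᶜ : Set W)) G) ∧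
    G.edgeSet.ncard = m}

/-- `f(H)`: the smallest `n` such that for each `N ∈ {n-1, n}` one has
`ex(N, ℋ) ≤ C(N,2) - 2N - 2`. -/
noncomputable def fH {W : Type*} (H : SimpleGraph W) : ℕ :=
  sInf {n | ∀ N ∈ ({n - 1, n} : Set ℕ),
    (exFam H N : ℤ) ≤ (N.choose 2 : ℤ) - 2 * N - 2}

/-- The coloring `c` is rainbow (injective) on the set `S` of edges. -/
def RainbowOn {V : Type*} (c : Sym2 V → ℕ) (S : Set (Sym2 V)) : Prop :=
  ∀ e₁ ∈ S, ∀ e₂ ∈ S, c e₁ = c e₂ → e₁ = e₂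

private lemma foldl_update_of_not_mem {α β : Type*} [DecidableEq α]
    (ps : List (α × β)) (c : α → β) (x : α) (h : ∀ p ∈ ps, p.1 ≠ x) :
    (ps.foldl (fun c' p => Function.update c' p.1 p.2) c) x = c x := by
  induction ps generalizing c with
  | nil => rfl
  | cons p ps ih =>
    rw [List.foldl_cons, ih _ (fun q hq => h q (List.mem_cons_of_mem _ hq)),
      Function.update_of_ne (h p List.mem_cons_self).symm]

private lemma not_mem_drop_of_nodup {α : Type*} (L : List α) (hnd : L.Nodup)
    (j : ℕ) (hj : j < L.length) : L[j] ∉ L.drop (j + 1) := by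
  intro hmem
  obtain ⟨r, hr, hre⟩ := List.getElem_of_mem hmem
  rw [List.getElem_drop] at hre
  have := (List.Nodup.getElem_inj_iff hnd).mp hre
  omega

private lemma foldl_update_take_get {α β : Type*} [DecidableEq α]
    (L : List α) (cs : List β) (hnd : L.Nodup) (hlen : cs.length = L.length)
    {m j : ℕ} (hj : j < m) (hm : m ≤ L.length) (c : α → β) :
    (((L.zip cs).take m).foldl (fun c' p => Function.update c' p.1 p.2) c)
      (L[j]'(lt_of_lt_of_le hj hm)) = cs[j]'(by omega) := by
  set ps := (L.zip cs).take m with hps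
  have hpslen : ps.length = m := by
    simp [hps, List.length_take, List.length_zip, hlen]
    omega
  have hmapps : ps.map Prod.fst = L.take m := by
    rw [hps, List.map_take, List.map_fst_zip (le_of_eq hlen.symm)]
  have h1 : ps = ps.take (j + 1) ++ ps.drop (j + 1) := (List.take_append_drop _ _).symm
  rw [h1, List.foldl_append]
  rw [foldl_update_of_not_mem]
  · have hjps : j < ps.length := by omega
    have h3 : ps[j]'hjps = (L[j]'(by omega), cs[j]'(by omega)) := by
      simp only [hps, List.getElem_take, List.getElem_zip]
    have h2 : ps.take (j + 1) = ps.take j ++ [(L[j]'(by omega), cs[j]'(by omega))] := by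
      rw [List.take_succ, List.getElem?_eq_getElem hjps, h3]
      rfl
    rw [h2, List.foldl_append]
    simp
  · intro p hp hpe
    have hfst : p.1 ∈ (ps.drop (j + 1)).map Prod.fst := List.mem_map_of_mem hp
    rw [List.map_drop, hmapps, List.drop_take] at hfst
    have : p.1 ∈ L.drop (j + 1) := List.take_subset _ _ hfst
    exact not_mem_drop_of_nodup L hnd j (by omega) (hpe ▸ this)

private lemma mem_take_exists {α : Type*} {L : List α} {m : ℕ} {q : α}
    (h : q ∈ L.take m) : ∃ j, ∃ hj : j < L.length, j < m ∧ L[j] = q := by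
  rw [List.mem_take_iff_getElem] at h
  obtain ⟨j, hj, hje⟩ := h
  simp only [lt_inf_iff] at hj
  exact ⟨j, hj.2, hj.1, hje⟩

private lemma get_mem_take {α : Type*} (L : List α) (i : ℕ) (hi : i < L.length) :
    L[i] ∈ L.take (i + 1) := by
  rw [List.mem_take_iff_getElem]
  exact ⟨i, by simp; omega, rfl⟩

private lemma exists_wrsat {W : Type*} [Fintype W] (H : SimpleGraph W) (u v : W)
    (huv : H.Adj u v) (hv : ∀ b, H.Adj b v → b = u) (n : ℕ)
    (hn : 2 * Fintype.card W + 5 ≤ n) :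
    ∃ (G : SimpleGraph (Fin n)) (c : Sym2 (Fin n) → ℕ),
      WeaklyRainbowSat H G c ∧ G.edgeSet.ncard ≤ (2 * Fintype.card W + 3) ^ 2 := by
  classical
  set h := Fintype.card W with hh
  have hW2 : 2 ≤ h := Fintype.one_lt_card_iff_nontrivial.mpr ⟨u, v, huv.ne⟩
  set k := h + 3 with hk
  set G : SimpleGraph (Fin n) :=
    { Adj := fun a b => a ≠ b ∧
        (((a : ℕ) < k ∧ (b : ℕ) < k + h) ∨ ((b : ℕ) < k ∧ (a : ℕ) < k + h))
      symm := ⟨fun a b hab => ⟨hab.1.symm, hab.2.symm⟩⟩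
      loopless := ⟨fun a ha => ha.1 rfl⟩ } with hG
  have hGadj : ∀ a b : Fin n, G.Adj a b ↔ (a ≠ b ∧
      (((a : ℕ) < k ∧ (b : ℕ) < k + h) ∨ ((b : ℕ) < k ∧ (a : ℕ) < k + h))) :=
    fun _ _ => Iff.rfl
  set c : Sym2 (Fin n) → ℕ := fun e => ((Fintype.equivFin (Sym2 (Fin n))) e : ℕ) with hc
  have hcinj : Function.Injective c :=
    fun e e' hee => (Fintype.equivFin (Sym2 (Fin n))).injective (Fin.val_injective hee)
  have hdisjE : ∀ E, E ∈ G.edgeSet → E ∉ Gᶜ.edgeSet := by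
    intro E
    induction E using Sym2.ind with
    | _ a b =>
      intro h1 h2
      rw [SimpleGraph.mem_edgeSet] at h1 h2
      exact h2.2 h1
  refine ⟨G, c, ?_, ?_⟩
  · -- WeaklyRainbowSat
    have hfin : (Gᶜ.edgeSet).Finite := Set.toFinite _
    set F := hfin.toFinset with hF
    set P : Sym2 (Fin n) → Prop := fun e => ∃ p ∈ e, (p : ℕ) < k + h with hP
    set A := (F.filter P).toList with hA
    set Bl := (F.filter (fun e => ¬ P e)).toList with hBl
    refine ⟨A ++ Bl, ?_, ?_, ?_⟩
    · exact List.Nodup.append (Finset.nodup_toList _) (Finset.nodup_toList _)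
        (by
          intro x hx hx'
          rw [hA, Finset.mem_toList, Finset.mem_filter] at hx
          rw [hBl, Finset.mem_toList, Finset.mem_filter] at hx'
          exact hx'.2 hx.2)
    · intro e
      rw [List.mem_append, hA, hBl, Finset.mem_toList, Finset.mem_toList,
        Finset.mem_filter, Finset.mem_filter, hF, Set.Finite.mem_toFinset]
      constructor
      · rintro (⟨he, -⟩ | ⟨he, -⟩) <;> exact he
      · intro he
        by_cases hp : P e
        · exact Or.inl ⟨he, hp⟩
        · exact Or.inr ⟨he, hp⟩
    · -- the saturation process
      intro cs hlen hnodupcs i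
      have hcasesW : ∀ w : W, u = w ∨ v = w ∨ (w ≠ u ∧ w ≠ v) := by
        intro w
        by_cases h1 : w = u
        · exact Or.inl h1.symm
        · by_cases h2 : w = v
          · exact Or.inr (Or.inl h2.symm)
          · exact Or.inr (Or.inr ⟨h1, h2⟩)
      have hnodup : (A ++ Bl).Nodup := List.Nodup.append (Finset.nodup_toList _) (Finset.nodup_toList _)
        (by
          intro x hx hx'
          rw [hA, Finset.mem_toList, Finset.mem_filter] at hx
          rw [hBl, Finset.mem_toList, Finset.mem_filter] at hx'
          exact hx'.2 hx.2)
      have hmem : ∀ e, e ∈ A ++ Bl ↔ e ∈ Gᶜ.edgeSet := by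
        intro e
        rw [List.mem_append, hA, hBl, Finset.mem_toList, Finset.mem_toList,
          Finset.mem_filter, Finset.mem_filter, hF, Set.Finite.mem_toFinset]
        constructor
        · rintro (⟨he, -⟩ | ⟨he, -⟩) <;> exact he
        · intro he
          by_cases hp : P e
          · exact Or.inl ⟨he, hp⟩
          · exact Or.inr ⟨he, hp⟩
      have hiL : (i : ℕ) < (A ++ Bl).length := i.isLt
      have him : (i : ℕ) + 1 ≤ (A ++ Bl).length := hiL
      have heL : (A ++ Bl)[(i : ℕ)] ∈ A ++ Bl := List.getElem_mem _
      have heS : (A ++ Bl)[(i : ℕ)] ∈ Gᶜ.edgeSet := (hmem _).mp heL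
      have hγlt : (i : ℕ) < cs.length := by omega
      set γ := cs[(i : ℕ)]'hγlt with hγ
      set c' := (((A ++ Bl).zip cs).take ((i : ℕ) + 1)).foldl
        (fun c' p => Function.update c' p.1 p.2) c with hc'
      have hc'e : c' ((A ++ Bl)[(i : ℕ)]) = γ :=
        foldl_update_take_get (A ++ Bl) cs hnodup hlen (Nat.lt_succ_self _) him c
      have hc'G : ∀ E, E ∈ G.edgeSet → c' E = c E := by
        intro E hE
        apply foldl_update_of_not_mem
        intro p hp hpe
        have hpL : p.1 ∈ A ++ Bl := (List.of_mem_zip (List.take_subset _ _ hp)).1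
        exact hdisjE E hE (hpe ▸ (hmem _).mp hpL)
      have hWcard : Fintype.card {w : W // w ≠ u ∧ w ≠ v} ≤ h := Fintype.card_subtype_le _
      set ι : {w : W // w ≠ u ∧ w ≠ v} → Fin h :=
        fun w => ⟨((Fintype.equivFin {w : W // w ≠ u ∧ w ≠ v}) w : ℕ),
          lt_of_lt_of_le (Fin.is_lt _) hWcard⟩ with hι
      have hιinj : Function.Injective ι := by
        intro w w' hww
        apply (Fintype.equivFin {w : W // w ≠ u ∧ w ≠ v}).injective
        apply Fin.val_injective
        have h6 := congrArg Fin.val hww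
        simpa [hι] using h6
      by_cases hPe : P ((A ++ Bl)[(i : ℕ)])
      · -- Case 1: the new edge touches the core region
        obtain ⟨t, htmem, htlt⟩ := hPe
        set o := Sym2.Mem.other htmem with ho
        have hspec : s(t, o) = (A ++ Bl)[(i : ℕ)] := Sym2.other_spec htmem
        have hcadj : Gᶜ.Adj t o := by
          rw [← SimpleGraph.mem_edgeSet, hspec]; exact heS
        rw [SimpleGraph.compl_adj] at hcadj
        obtain ⟨hto, hnadj⟩ := hcadj
        have hok : k ≤ (o : ℕ) := by
          by_contra hlt
          exact hnadj ((hGadj t o).mpr ⟨hto, Or.inr ⟨by omega, htlt⟩⟩)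
        obtain ⟨b1, b2, hB⟩ : ∃ b1 b2 : Fin n, ∀ E, c E = γ → E = s(b1, b2) := by
          by_cases hexq : ∃ q₀, c q₀ = γ
          · obtain ⟨q₀, hq₀⟩ := hexq
            induction q₀ using Sym2.ind with
            | _ b1 b2 => exact ⟨b1, b2, fun E hE => hcinj (hE.trans hq₀.symm)⟩
          · exact ⟨t, t, fun E hE => absurd ⟨E, hE⟩ hexq⟩
        have hkn : k ≤ n := by omega
        set embk : Fin k ↪ Fin n :=
          ⟨fun j : Fin k => (⟨(j : ℕ), lt_of_lt_of_le j.isLt hkn⟩ : Fin n),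
           fun a b hab => Fin.ext (by simpa using congrArg Fin.val hab)⟩ with hembk
        set Cf := ((Finset.univ : Finset (Fin k)).map embk) \ {t, b1, b2} with hCf
        have hCfcard : h ≤ Cf.card := by
          have h1 := Finset.le_card_sdiff ({t, b1, b2} : Finset (Fin n))
            ((Finset.univ : Finset (Fin k)).map embk)
          have h2 : (((Finset.univ : Finset (Fin k)).map embk)).card = k := by simp
          have h3 : ({t, b1, b2} : Finset (Fin n)).card ≤ 3 := by
            apply le_trans (Finset.card_insert_le _ _)
            have h4 := Finset.card_insert_le b1 ({b2} : Finset (Fin n))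
            rw [Finset.card_singleton] at h4
            omega
          rw [hCf]
          omega
        have hglen : h ≤ Cf.toList.length := by
          rw [Finset.length_toList]; exact hCfcard
        set g : {w : W // w ≠ u ∧ w ≠ v} → Fin n :=
          fun w => Cf.toList[(ι w : ℕ)]'(lt_of_lt_of_le (ι w).isLt hglen) with hgdef
        have hgCf : ∀ w, g w ∈ Cf := by
          intro w
          rw [← Finset.mem_toList]
          exact List.getElem_mem _
        have hginj : Function.Injective g := by
          intro w w' hww
          exact hιinj (Fin.val_injective
            ((List.Nodup.getElem_inj_iff (Finset.nodup_toList _)).mp hww))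
        have hglt : ∀ w, (g w : ℕ) < k := by
          intro w
          have hw := hgCf w
          rw [hCf, Finset.mem_sdiff, Finset.mem_map] at hw
          obtain ⟨⟨j, -, hj⟩, -⟩ := hw
          rw [← hj]
          exact j.isLt
        have hgB : ∀ w, g w ≠ t ∧ g w ≠ b1 ∧ g w ≠ b2 := by
          intro w
          have hw := (Finset.mem_sdiff.mp (hCf ▸ hgCf w)).2
          simp only [Finset.mem_insert, Finset.mem_singleton] at hw
          push_neg at hw
          exact hw
        set f : W → Fin n := fun w =>
          if hwu : w = u then t else if hwv : w = v then o else g ⟨w, hwu, hwv⟩ with hfdef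
        have hfu : f u = t := by rw [hfdef]; simp
        have hfv : f v = o := by rw [hfdef]; simp [huv.ne']
        have hfw : ∀ (w) (hw : w ≠ u ∧ w ≠ v), f w = g ⟨w, hw⟩ := by
          intro w hw; rw [hfdef]; simp [hw.1, hw.2]
        have hfinj : Function.Injective f := by
          intro w w' hh
          rcases hcasesW w with rfl | rfl | hw
          · rcases hcasesW w' with rfl | rfl | hw'
            · rfl
            · rw [hfu, hfv] at hh; exact absurd hh hto
            · rw [hfu, hfw w' hw'] at hh; exact absurd hh.symm (hgB _).1
          · rcases hcasesW w' with rfl | rfl | hw'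
            · rw [hfv, hfu] at hh; exact absurd hh.symm hto
            · rfl
            · rw [hfv, hfw w' hw'] at hh
              have h5 := hglt ⟨w', hw'⟩
              have h6 := congrArg Fin.val hh
              omega
          · rcases hcasesW w' with rfl | rfl | hw'
            · rw [hfw w hw, hfu] at hh; exact absurd hh (hgB _).1
            · rw [hfw w hw, hfv] at hh
              have h5 := hglt ⟨w, hw⟩
              have h6 := congrArg Fin.val hh
              omega
            · rw [hfw w hw, hfw w' hw'] at hh
              exact congrArg Subtype.val (hginj hh)
        have hcopy : ∀ a b, H.Adj a b →
            (s(a, b) = s(u, v) ∧ s(f a, f b) = (A ++ Bl)[(i : ℕ)]) ∨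
            (s(f a, f b) ∈ G.edgeSet ∧ ∃ wsub, g wsub ∈ s(f a, f b)) := by
          intro a b hab
          rcases hcasesW a with rfl | rfl | ha
          · rcases hcasesW b with rfl | rfl | hb
            · exact absurd rfl hab.ne
            · left; exact ⟨rfl, by rw [hfu, hfv]; exact hspec⟩
            · right
              rw [hfu, hfw b hb]
              refine ⟨?_, ⟨b, hb⟩, Sym2.mem_mk_right _ _⟩
              rw [SimpleGraph.mem_edgeSet, hGadj]
              exact ⟨Ne.symm (hgB _).1, Or.inr ⟨hglt _, htlt⟩⟩
          · -- a = v
            obtain rfl : u = b := (hv b hab.symm).symm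
            left
            constructor
            · exact Sym2.eq_swap
            · rw [hfu, hfv, Sym2.eq_swap]; exact hspec
          · rcases hcasesW b with rfl | rfl | hb
            · right
              rw [hfw a ha, hfu]
              refine ⟨?_, ⟨a, ha⟩, Sym2.mem_mk_left _ _⟩
              rw [SimpleGraph.mem_edgeSet, hGadj]
              exact ⟨(hgB _).1, Or.inl ⟨hglt _, htlt⟩⟩
            · exact absurd (hv a hab) ha.1
            · right
              rw [hfw a ha, hfw b hb]
              refine ⟨?_, ⟨a, ha⟩, Sym2.mem_mk_left _ _⟩
              rw [SimpleGraph.mem_edgeSet, hGadj]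
              refine ⟨fun hgg => hab.ne (Subtype.mk_eq_mk.mp (hginj hgg)), ?_⟩
              refine Or.inl ⟨hglt _, ?_⟩
              have h5 := hglt ⟨b, hb⟩
              omega
        refine ⟨f, hfinj, ?_, ?_, u, v, huv, ?_⟩
        · intro a b hab
          rcases hcopy a b hab with ⟨-, hfe⟩ | ⟨hmemE, -⟩
          · rw [SimpleGraph.sup_adj]
            right
            rw [SimpleGraph.fromEdgeSet_adj]
            refine ⟨?_, hfinj.ne hab.ne⟩
            rw [Set.mem_setOf_eq, hfe]
            exact get_mem_take _ _ hiL
          · exact (SimpleGraph.sup_adj _ _ _ _).mpr (Or.inl ((SimpleGraph.mem_edgeSet _).mp hmemE))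
        · have key : ∀ x y, H.Adj x y →
              (s(x, y) = s(u, v) ∧ c' s(f x, f y) = γ) ∨
              (s(x, y) ≠ s(u, v) ∧ c' s(f x, f y) = c s(f x, f y) ∧ c s(f x, f y) ≠ γ) := by
            intro x y hxy
            rcases hcopy x y hxy with ⟨h1, h2⟩ | ⟨h1, wsub, h2⟩
            · left; exact ⟨h1, by rw [h2]; exact hc'e⟩
            · right
              refine ⟨?_, hc'G _ h1, ?_⟩
              · intro hexeq
                have hmm : s(f x, f y) = s(f u, f v) := by
                  rw [← Sym2.map_pair_eq f, ← Sym2.map_pair_eq f, hexeq]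
                rw [hfu, hfv] at hmm
                rw [hmm, hspec] at h1
                exact hdisjE _ h1 heS
              · intro hcE
                have h4 := hB _ hcE
                rw [h4] at h2
                rcases Sym2.mem_iff.mp h2 with h3 | h3
                · exact (hgB wsub).2.1 h3
                · exact (hgB wsub).2.2 h3
          intro a b a' b' hab ha'b' hcc
          rcases key a b hab with ⟨h1, h2⟩ | ⟨h1, h2, h3⟩ <;>
            rcases key a' b' ha'b' with ⟨h1', h2'⟩ | ⟨h1', h2', h3'⟩
          · rw [h1, h1']
          · rw [h2, h2'] at hcc; exact absurd hcc.symm h3'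
          · rw [h2, h2'] at hcc; exact absurd hcc h3
          · rw [h2, h2'] at hcc
            have h5 := hcinj hcc
            rw [← Sym2.map_pair_eq f, ← Sym2.map_pair_eq f] at h5
            exact Sym2.map.injective hfinj h5
        · rw [hfu, hfv]
          exact hspec.symm
      · -- Case 2: the new edge has both ends outside
        have hex : ∀ z : Sym2 (Fin n), ∃ a b : Fin n, z = s(a, b) :=
          fun z => Sym2.ind (fun a b => ⟨a, b, rfl⟩) z
        obtain ⟨x, y, hrep⟩ := hex ((A ++ Bl)[(i : ℕ)])
        have hcadj : Gᶜ.Adj x y := by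
          rw [← SimpleGraph.mem_edgeSet, ← hrep]; exact heS
        rw [SimpleGraph.compl_adj] at hcadj
        obtain ⟨hxyne, -⟩ := hcadj
        have hPx : k + h ≤ (x : ℕ) := by
          by_contra hlt
          exact hPe ⟨x, by rw [hrep]; exact Sym2.mem_mk_left _ _, by omega⟩
        have hPy : k + h ≤ (y : ℕ) := by
          by_contra hlt
          exact hPe ⟨y, by rw [hrep]; exact Sym2.mem_mk_right _ _, by omega⟩
        have hAlen : A.length ≤ (i : ℕ) := by
          by_contra hlt
          push_neg at hlt
          have h1 : (A ++ Bl)[(i : ℕ)] = A[(i : ℕ)]'hlt := List.getElem_append_left hlt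
          have h2 : (A ++ Bl)[(i : ℕ)] ∈ A := h1 ▸ List.getElem_mem _
          have hPA : ∀ q ∈ A, P q := by
            intro q hq
            rw [hA, Finset.mem_toList, Finset.mem_filter] at hq
            exact hq.2
          exact hPe (hPA _ h2)
        have hAsub : ∀ q ∈ A, q ∈ (A ++ Bl).take ((i : ℕ) + 1) := by
          intro q hq
          obtain ⟨j, hjA, hje⟩ := List.getElem_of_mem hq
          rw [List.mem_take_iff_getElem]
          refine ⟨j, ?_, ?_⟩
          · simp only [lt_inf_iff, List.length_append]
            omega
          · rw [List.getElem_append_left hjA]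
            exact hje
        have hkhn : k + h ≤ n := by omega
        set g : {w : W // w ≠ u ∧ w ≠ v} → Fin n :=
          fun w => ⟨k + (ι w : ℕ), by have := (ι w).isLt; omega⟩ with hgdef
        have hgval : ∀ w, (g w : ℕ) = k + (ι w : ℕ) := fun w => rfl
        have hginj : Function.Injective g := by
          intro w w' hww
          apply hιinj
          apply Fin.val_injective
          have h6 := congrArg Fin.val hww
          rw [hgval, hgval] at h6
          omega
        have hgrange : ∀ w, k ≤ (g w : ℕ) ∧ (g w : ℕ) < k + h := by
          intro w
          have := (ι w).isLt
          rw [hgval]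
          omega
        set f : W → Fin n := fun w =>
          if hwu : w = u then x else if hwv : w = v then y else g ⟨w, hwu, hwv⟩ with hfdef
        have hfu : f u = x := by rw [hfdef]; simp
        have hfv : f v = y := by rw [hfdef]; simp [huv.ne']
        have hfw : ∀ (w) (hw : w ≠ u ∧ w ≠ v), f w = g ⟨w, hw⟩ := by
          intro w hw; rw [hfdef]; simp [hw.1, hw.2]
        have hfinj : Function.Injective f := by
          intro w w' hh
          rcases hcasesW w with rfl | rfl | hw
          · rcases hcasesW w' with rfl | rfl | hw'
            · rfl
            · rw [hfu, hfv] at hh; exact absurd hh hxyne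
            · rw [hfu, hfw w' hw'] at hh
              have h5 := (hgrange ⟨w', hw'⟩).2
              have h6 := congrArg Fin.val hh
              omega
          · rcases hcasesW w' with rfl | rfl | hw'
            · rw [hfv, hfu] at hh; exact absurd hh.symm hxyne
            · rfl
            · rw [hfv, hfw w' hw'] at hh
              have h5 := (hgrange ⟨w', hw'⟩).2
              have h6 := congrArg Fin.val hh
              omega
          · rcases hcasesW w' with rfl | rfl | hw'
            · rw [hfw w hw, hfu] at hh
              have h5 := (hgrange ⟨w, hw⟩).2
              have h6 := congrArg Fin.val hh
              omega
            · rw [hfw w hw, hfv] at hh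
              have h5 := (hgrange ⟨w, hw⟩).2
              have h6 := congrArg Fin.val hh
              omega
            · rw [hfw w hw, hfw w' hw'] at hh
              exact congrArg Subtype.val (hginj hh)
        have hmemA : ∀ E, E ∈ Gᶜ.edgeSet → (∃ p ∈ E, (p : ℕ) < k + h) →
            E ∈ (A ++ Bl).take ((i : ℕ) + 1) := by
          intro E hE hPE
          apply hAsub
          rw [hA, Finset.mem_toList, Finset.mem_filter, hF, Set.Finite.mem_toFinset]
          exact ⟨hE, hPE⟩
        have hcopy2 : ∀ a b, H.Adj a b → s(f a, f b) ∈ (A ++ Bl).take ((i : ℕ) + 1) := by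
          intro a b hab
          rcases hcasesW a with rfl | rfl | ha
          · rcases hcasesW b with rfl | rfl | hb
            · exact absurd rfl hab.ne
            · rw [hfu, hfv, ← hrep]
              exact get_mem_take _ _ hiL
            · rw [hfu, hfw b hb]
              apply hmemA
              · rw [SimpleGraph.mem_edgeSet, SimpleGraph.compl_adj]
                have h5 := (hgrange ⟨b, hb⟩).2
                refine ⟨fun hq => by have := congrArg Fin.val hq; omega, ?_⟩
                rw [hGadj]
                rintro ⟨-, (⟨h6, -⟩ | ⟨-, h6⟩)⟩ <;> omega
              · exact ⟨g ⟨b, hb⟩, Sym2.mem_mk_right _ _, (hgrange _).2⟩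
          · obtain rfl : u = b := (hv b hab.symm).symm
            rw [hfu, hfv, Sym2.eq_swap, ← hrep]
            exact get_mem_take _ _ hiL
          · rcases hcasesW b with rfl | rfl | hb
            · rw [hfw a ha, hfu]
              apply hmemA
              · rw [SimpleGraph.mem_edgeSet, SimpleGraph.compl_adj]
                have h5 := (hgrange ⟨a, ha⟩).2
                refine ⟨fun hq => by have := congrArg Fin.val hq; omega, ?_⟩
                rw [hGadj]
                rintro ⟨-, (⟨-, h6⟩ | ⟨h6, -⟩)⟩ <;> omega
              · exact ⟨g ⟨a, ha⟩, Sym2.mem_mk_left _ _, (hgrange _).2⟩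
            · exact absurd (hv a hab) ha.1
            · rw [hfw a ha, hfw b hb]
              apply hmemA
              · rw [SimpleGraph.mem_edgeSet, SimpleGraph.compl_adj]
                have h5 := (hgrange ⟨a, ha⟩).1
                have h5' := (hgrange ⟨b, hb⟩).1
                refine ⟨fun hgg => hab.ne (Subtype.mk_eq_mk.mp (hginj hgg)), ?_⟩
                rw [hGadj]
                rintro ⟨-, (⟨h6, -⟩ | ⟨h6, -⟩)⟩ <;> omega
              · exact ⟨g ⟨a, ha⟩, Sym2.mem_mk_left _ _, (hgrange _).2⟩
        refine ⟨f, hfinj, ?_, ?_, u, v, huv, ?_⟩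
        · intro a b hab
          rw [SimpleGraph.sup_adj]
          right
          rw [SimpleGraph.fromEdgeSet_adj]
          exact ⟨hcopy2 a b hab, hfinj.ne hab.ne⟩
        · intro a b a' b' hab ha'b' hcc
          obtain ⟨j, hj, hjm, hje⟩ := mem_take_exists (hcopy2 a b hab)
          obtain ⟨j', hj', hjm', hje'⟩ := mem_take_exists (hcopy2 a' b' ha'b')
          have e1 : c' s(f a, f b) = cs[j]'(by omega) := by
            rw [← hje]
            exact foldl_update_take_get (A ++ Bl) cs hnodup hlen hjm him c
          have e2 : c' s(f a', f b') = cs[j']'(by omega) := by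
            rw [← hje']
            exact foldl_update_take_get (A ++ Bl) cs hnodup hlen hjm' him c
          rw [e1, e2] at hcc
          have hjj : j = j' := (List.Nodup.getElem_inj_iff hnodupcs).mp hcc
          subst hjj
          have h5 : s(f a, f b) = s(f a', f b') := by rw [← hje, ← hje']
          rw [← Sym2.map_pair_eq f, ← Sym2.map_pair_eq f] at h5
          exact Sym2.map.injective hfinj h5
        · rw [hfu, hfv]
          exact hrep
  · -- edge count
    have hsubset : G.edgeSet ⊆
        ↑((Finset.univ.filter (fun m : Fin n => (m : ℕ) < k + h)).sym2) := by
      intro E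
      induction E using Sym2.ind with
      | _ a b =>
        intro hE
        rw [SimpleGraph.mem_edgeSet, hGadj] at hE
        rw [Finset.mem_coe, Finset.mk_mem_sym2_iff, Finset.mem_filter, Finset.mem_filter]
        refine ⟨⟨Finset.mem_univ _, ?_⟩, Finset.mem_univ _, ?_⟩ <;> omega
    have hcard1 : (Finset.univ.filter (fun m : Fin n => (m : ℕ) < k + h)).card ≤ k + h := by
      have := Finset.card_le_card_of_injOn (t := Finset.range (k + h))
        (s := Finset.univ.filter (fun m : Fin n => (m : ℕ) < k + h))
        (fun m : Fin n => (m : ℕ))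
        (by intro a ha; rw [Finset.mem_coe, Finset.mem_filter] at ha; simp only [Finset.mem_coe, Finset.mem_range]; exact ha.2)
        (fun a _ b _ hab => Fin.val_injective hab)
      simpa using this
    calc G.edgeSet.ncard
        ≤ ((Finset.univ.filter (fun m : Fin n => (m : ℕ) < k + h)).sym2 : Finset (Sym2 (Fin n))).card := by
          rw [← Set.ncard_coe_finset]
          exact Set.ncard_le_ncard hsubset (Finset.finite_toSet _)
      _ ≤ (2 * h + 3) ^ 2 := by
          rw [Finset.card_sym2]
          have h1 : (Finset.univ.filter (fun m : Fin n => (m : ℕ) < k + h)).card + 1 ≤ 2 * h + 4 := by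
            omega
          calc ((Finset.univ.filter (fun m : Fin n => (m : ℕ) < k + h)).card + 1).choose 2
              ≤ (2 * h + 4).choose 2 := Nat.choose_le_choose 2 h1
            _ ≤ (2 * h + 3) ^ 2 := by
                rw [Nat.choose_two_right]
                have e1 : 2 * h + 4 - 1 = 2 * h + 3 := by omega
                rw [e1]
                have e2 : (2 * h + 4) * (2 * h + 3) = 2 * ((h + 2) * (2 * h + 3)) := by ring
                rw [e2, Nat.mul_div_cancel_left _ (by norm_num : 0 < 2)]
                rw [pow_two]
                exact Nat.mul_le_mul_right _ (by omega)

private lemma pendant_vertex_unique {W : Type*} (H : SimpleGraph W) {u v : W}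
    (huv : H.Adj u v) (h1 : (H.neighborSet v).ncard = 1) :
    ∀ b, H.Adj b v → b = u := by
  obtain ⟨a, ha⟩ := Set.ncard_eq_one.mp h1
  intro b hb
  have hu : u ∈ H.neighborSet v := by
    rw [SimpleGraph.mem_neighborSet]; exact huv.symm
  have hb' : b ∈ H.neighborSet v := by
    rw [SimpleGraph.mem_neighborSet]; exact hb.symm
  rw [ha, Set.mem_singleton_iff] at hu hb'
  rw [hb', ← hu]

/-- If the non-empty graph `H` contains a pendant edge, then
`rwsat(n, H) / n` tends to `0`. -/
theorem rwsat_limit_zero_of_pendant {W : Type*} [Fintype W] (H : SimpleGraph W)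
    (hH : H.edgeSet.Nonempty)
    (hpend : ∃ u v, H.Adj u v ∧ (H.neighborSet v).ncard = 1) :
    Filter.Tendsto (fun n : ℕ => (rwsat H n : ℝ) / n) Filter.atTop (nhds 0) := by
  classical
  obtain ⟨u, v, huv, hone⟩ := hpend
  have hvu : ∀ b, H.Adj b v → b = u := pendant_vertex_unique H huv hone
  set C := (2 * Fintype.card W + 3) ^ 2 with hC
  have hbound : ∀ n : ℕ, 2 * Fintype.card W + 5 ≤ n → rwsat H n ≤ C := by
    intro n hn
    obtain ⟨G, c, hw, hec⟩ := exists_wrsat H u v huv hvu n hn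
    exact le_trans (Nat.sInf_le (Or.inl ⟨G, c, hw, rfl⟩)) hec
  have h0 : Filter.Tendsto (fun n : ℕ => (C : ℝ) / n) Filter.atTop (nhds 0) :=
    tendsto_const_div_atTop_nhds_zero_nat (C : ℝ)
  apply squeeze_zero' ?_ ?_ h0
  · filter_upwards with n
    positivity
  · filter_upwards [Filter.eventually_ge_atTop (2 * Fintype.card W + 5)] with n hn
    have hn0 : (0 : ℝ) < n := by
      have : 0 < n := by omega
      exact_mod_cast this
    rw [div_le_div_iff_of_pos_right hn0]
    exact_mod_cast hbound n hn
end

section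
/- Let n ≥ m ≥ 2 be integers. Then every subgraph of the complete bipartite graph K_{m,n} with at least m(n−1) edges contains K_{⌊m/2⌋, ⌊n/2⌋} as a subgraph; more precisely, if G is a bipartite graph with bipartition (A, B), |A| = m, |B| = n, and |E(G)| ≥ m(n−1), then there exist subsets A* ⊆ A and B* ⊆ B with |A*| = ⌊m/2⌋ and |B*| ≥ n/2 such that every vertex of A* is adjacent in G to every vertex of B*. -/
open SimpleGraph

/-!
Call `d a` the number of non-neighbours in `Fin n` of a vertex `a : Fin m`. Since `G` misses at
most `m` of the `m * n` possible edges, `∑ a, d a ≤ m`. The `⌊m/2⌋` vertices with the smallest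
values of `d` carry at most a `⌊m/2⌋ / m` share of this sum, so together they have at most
`⌊m/2⌋` non-neighbours; their common neighbourhood therefore misses at most `⌊m/2⌋ ≤ n/2`
vertices of `Fin n`.
-/

namespace Finset

theorem exists_card_eq_forall_le_of_mem_of_notMem {ι α : Type*} [Fintype ι] [DecidableEq ι]
    [LinearOrder α] (f : ι → α) {k : ℕ} (hk : k ≤ Fintype.card ι) :
    ∃ s : Finset ι, #s = k ∧ ∀ i ∈ s, ∀ j ∉ s, f i ≤ f j := by
  induction k with
  | zero => exact ⟨∅, by simp, by simp⟩
  | succ k ih =>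
    obtain ⟨s, hs, hle⟩ := ih (by omega)
    have hne : sᶜ.Nonempty := by rw [← card_pos, card_compl]; omega
    obtain ⟨c, hc, hmin⟩ := sᶜ.exists_min_image f hne
    rw [mem_compl] at hc
    refine ⟨insert c s, by rw [card_insert_of_notMem hc, hs], fun i hi j hj => ?_⟩
    rw [mem_insert, not_or] at hj
    rcases mem_insert.1 hi with rfl | hi
    · exact hmin j (mem_compl.2 hj.2)
    · exact hle i hi j hj.2

theorem card_nsmul_sum_le_of_forall_le {ι α : Type*} [Fintype ι] [DecidableEq ι]
    [AddCommMonoid α] [LinearOrder α] [IsOrderedAddMonoid α] {f : ι → α} {s : Finset ι}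
    (hf : ∀ i ∈ s, ∀ j ∉ s, f i ≤ f j) :
    Fintype.card ι • ∑ i ∈ s, f i ≤ #s • ∑ i, f i := by
  obtain rfl | hs := s.eq_empty_or_nonempty
  · simp
  set M := s.sup' hs f
  have hin : ∑ i ∈ s, f i ≤ #s • M := sum_le_card_nsmul _ _ _ fun i hi => le_sup' f hi
  have hout : #sᶜ • M ≤ ∑ i ∈ sᶜ, f i :=
    card_nsmul_le_sum _ _ _ fun j hj => sup'_le hs f fun i hi => hf i hi j (mem_compl.1 hj)
  calc Fintype.card ι • ∑ i ∈ s, f i = #s • ∑ i ∈ s, f i + #sᶜ • ∑ i ∈ s, f i := by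
        rw [← add_nsmul, card_add_card_compl]
    _ ≤ #s • ∑ i ∈ s, f i + #sᶜ • (#s • M) := by gcongr
    _ = #s • ∑ i ∈ s, f i + #s • (#sᶜ • M) := by rw [smul_comm]
    _ ≤ #s • ∑ i ∈ s, f i + #s • ∑ i ∈ sᶜ, f i := by gcongr
    _ = #s • ∑ i, f i := by rw [← nsmul_add, sum_add_sum_compl]

section Relation

variable {α β : Type*} [Fintype β] (r : α → β → Prop) [∀ a b, Decidable (r a b)]

theorem sum_card_filter_not_add_card_filter [Fintype α] :
    ∑ a, #{b | ¬ r a b} + #{p : α × β | r p.1 p.2} = Fintype.card α * Fintype.card β := by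
  have hsum : ∑ a, #{b | ¬ r a b} = #{p : α × β | ¬ r p.1 p.2} := by
    simp only [card_filter, Fintype.sum_prod_type]
  rw [hsum, add_comm, card_filter_add_card_filter_not, card_univ, Fintype.card_prod]

theorem card_le_card_filter_forall_add_sum (A : Finset α) :
    Fintype.card β ≤ #{b | ∀ a ∈ A, r a b} + ∑ a ∈ A, #{b | ¬ r a b} := by
  have := Classical.decEq β
  have hbad : ({b | ¬ ∀ a ∈ A, r a b} : Finset β) ⊆ A.biUnion fun a => {b | ¬ r a b} := by
    intro b hb
    simpa using hb
  calc Fintype.card β = #{b | ∀ a ∈ A, r a b} + #{b | ¬ ∀ a ∈ A, r a b} := by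
        rw [card_filter_add_card_filter_not, card_univ]
    _ ≤ _ := by grw [card_le_card hbad, card_biUnion_le]

end Relation

end Finset

open Finset

theorem SimpleGraph.ncard_edgeSet_eq_card_filter_adj_inl_inr {α β : Type*} [Fintype α]
    [Fintype β] {G : SimpleGraph (α ⊕ β)} [DecidableRel G.Adj]
    (hG : ∀ u v, G.Adj u v → u.isLeft ≠ v.isLeft) :
    G.edgeSet.ncard = #{p : α × β | G.Adj (.inl p.1) (.inr p.2)} := by
  have hinj : Function.Injective fun p : α × β => s(Sum.inl p.1, Sum.inr p.2) := by
    rintro ⟨a, b⟩ ⟨a', b'⟩ h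
    simpa using h
  have hE : G.edgeSet = (fun p : α × β => s(.inl p.1, .inr p.2)) ''
      {p | G.Adj (.inl p.1) (.inr p.2)} := by
    refine Set.ext <| Sym2.ind fun u v => ⟨fun h => ?_, ?_⟩
    · have := hG u v h
      cases u <;> cases v <;> simp_all [adj_comm]
    · rintro ⟨⟨a, b⟩, hab, he⟩
      simpa [← he] using hab
  rw [hE, Set.ncard_image_of_injective _ hinj, ← Set.ncard_coe_finset]
  simp

/-- Let `n ≥ m ≥ 2`. If `G` is a bipartite graph with bipartition `(Fin m, Fin n)`
and at least `m(n-1)` edges, then there are `A* ⊆ Fin m` and `B* ⊆ Fin n` with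
`|A*| = ⌊m/2⌋` and `|B*| ≥ n/2` such that every vertex of `A*` is adjacent to
every vertex of `B*`. -/
theorem complete_bipartite_subgraph (m n : ℕ) (hm : 2 ≤ m) (hmn : m ≤ n)
    (G : SimpleGraph (Fin m ⊕ Fin n))
    (hbip : ∀ u v, G.Adj u v → u.isLeft ≠ v.isLeft)
    (hE : m * (n - 1) ≤ G.edgeSet.ncard) :
    ∃ (A : Finset (Fin m)) (B : Finset (Fin n)),
      A.card = m / 2 ∧ n ≤ 2 * B.card ∧
      ∀ a ∈ A, ∀ b ∈ B, G.Adj (Sum.inl a) (Sum.inr b) := by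
  have : DecidableRel G.Adj := Classical.decRel _
  set r : Fin m → Fin n → Prop := fun a b => G.Adj (.inl a) (.inr b)
  set d : Fin m → ℕ := fun a => #{b | ¬ r a b}
  have hd : ∑ a, d a ≤ m := by
    have hcount : ∑ a, d a + G.edgeSet.ncard = m * n := by
      rw [SimpleGraph.ncard_edgeSet_eq_card_filter_adj_inl_inr hbip]
      simpa using sum_card_filter_not_add_card_filter r
    have hmn' : m * (n - 1) + m = m * n := by
      rw [← Nat.mul_add_one, Nat.sub_add_cancel (by omega)]
    omega
  obtain ⟨A, hA, hAd⟩ := exists_card_eq_forall_le_of_mem_of_notMem d (k := m / 2)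
    (by simpa using Nat.div_le_self m 2)
  have hAsum : ∑ a ∈ A, d a ≤ m / 2 := by
    have := card_nsmul_sum_le_of_forall_le hAd
    simp only [Fintype.card_fin, smul_eq_mul, hA] at this
    refine Nat.le_of_mul_le_mul_left ?_ (by omega : 0 < m)
    calc m * ∑ a ∈ A, d a ≤ m / 2 * ∑ a, d a := this
      _ ≤ m / 2 * m := by gcongr
      _ = m * (m / 2) := mul_comm _ _
  refine ⟨A, ({b | ∀ a ∈ A, r a b} : Finset (Fin n)), hA, ?_,
    fun a ha b hb => (mem_filter.1 hb).2 a ha⟩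
  have hB : n ≤ #({b | ∀ a ∈ A, r a b} : Finset (Fin n)) + ∑ a ∈ A, d a := by
    convert card_le_card_filter_forall_add_sum r A
    simp
  omega
end

section
/- Let H be a graph with E(H) ≠ ∅, let F be an edge-colored complete graph of order f(H) + 2, and let u, v be two distinct vertices of F. Suppose the edge-coloring of F is such that the induced edge-colored subgraph F − {u, v} is rainbow, and all the edges between {u, v} and V(F) \ {u, v} receive pairwise distinct colors (i.e., they form a rainbow copy of K_{2, f(H)}). Then for every color assigned to the edge uv, F contains a rainbow copy of H containing the edge uv. -/
open SimpleGraph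

section Aux
open Finset

private def colGraph {V : Type*} (c : Sym2 V → ℕ) (S : Finset V) (F : Finset ℕ) :
    SimpleGraph {x // x ∈ S} where
  Adj x y := x ≠ y ∧ c s(x.1, y.1) ∉ F
  symm := ⟨by
    rintro x y ⟨hne, hcol⟩
    refine ⟨hne.symm, ?_⟩
    rwa [Sym2.eq_swap]⟩
  loopless := ⟨fun x h => h.1 rfl⟩

@[simp] private lemma colGraph_adj {V : Type*} (c : Sym2 V → ℕ) (S : Finset V) (F : Finset ℕ)
    (x y : {x // x ∈ S}) :
    (colGraph c S F).Adj x y ↔ x ≠ y ∧ c s(x.1, y.1) ∉ F := Iff.rfl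


lemma two_dvd_mul_pred (N : ℕ) : 2 ∣ N * (N - 1) := by
  rcases Nat.even_or_odd N with h | h
  · exact Dvd.dvd.mul_right h.two_dvd _
  · obtain ⟨k, hk⟩ := h
    exact Dvd.dvd.mul_left (by omega : 2 ∣ N - 1) _

lemma turanGraph_degree_le {N r : ℕ} (hr : 0 < r) (hrN : r ≤ N) (v : Fin N) :
    (turanGraph N r).degree v ≤ N - N / r := by
  classical
  have hN : 0 < N := hr.trans_le hrN
  set M : Finset (Fin N) := (Finset.range (N / r)).image
    (fun k => (⟨((v : ℕ) % r + k * r) % N, Nat.mod_lt _ hN⟩ : Fin N)) with hM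
  have hval : ∀ k ∈ Finset.range (N / r), (v : ℕ) % r + k * r < N := by
    intro k hk
    rw [Finset.mem_range] at hk
    have h1 : (k + 1) * r ≤ N / r * r := Nat.mul_le_mul_right r (by omega)
    have h2 : N / r * r ≤ N := Nat.div_mul_le_self N r
    have h3 : (v : ℕ) % r < r := Nat.mod_lt _ hr
    have h4 : (k + 1) * r = k * r + r := by ring
    omega
  have hMcard : #M = N / r := by
    rw [hM, Finset.card_image_of_injOn, Finset.card_range]
    intro k hk l hl hkl
    have hk' := hval k hk
    have hl' := hval l hl
    have : ((v : ℕ) % r + k * r) % N = ((v : ℕ) % r + l * r) % N := congrArg Fin.val hkl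
    rw [Nat.mod_eq_of_lt hk', Nat.mod_eq_of_lt hl'] at this
    have := Nat.eq_of_mul_eq_mul_right hr (by omega : k * r = l * r)
    omega
  have hdisj : ∀ w ∈ M, w ∉ (turanGraph N r).neighborFinset v := by
    intro w hw
    rw [hM, Finset.mem_image] at hw
    obtain ⟨k, hk, rfl⟩ := hw
    rw [SimpleGraph.mem_neighborFinset]
    intro hadj
    have hadj' : (v : ℕ) % r ≠ ((v : ℕ) % r + k * r) % N % r := hadj
    apply hadj'
    rw [Nat.mod_eq_of_lt (hval k hk), Nat.add_mul_mod_self_right]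
    exact (Nat.mod_eq_of_lt (Nat.mod_lt _ hr)).symm
  have hsub : (turanGraph N r).neighborFinset v ⊆ Finset.univ \ M := by
    intro w hw
    rw [Finset.mem_sdiff]
    exact ⟨Finset.mem_univ _, fun hwM => hdisj w hwM hw⟩
  calc (turanGraph N r).degree v ≤ #(Finset.univ \ M) := Finset.card_le_card hsub
    _ = N - N / r := by
        rw [Finset.card_sdiff_of_subset (Finset.subset_univ _), hMcard, Finset.card_univ,
          Fintype.card_fin]

lemma turan_bound {r N : ℕ} (hr : 0 < r) (hN : 6 * r ≤ N)
    (G : SimpleGraph (Fin N)) (hG : G.CliqueFree (r + 1)) :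
    G.edgeSet.ncard + 2 * N + 2 ≤ N.choose 2 := by
  classical
  obtain ⟨T, hdec, hT⟩ := exists_isTuranMaximal (V := Fin N) hr
  have h1 : #G.edgeFinset ≤ #T.edgeFinset := hT.2 (G' := G) hG
  obtain ⟨φ⟩ := hT.nonempty_iso_turanGraph
  have h2 : #T.edgeFinset = #(turanGraph (Fintype.card (Fin N)) r).edgeFinset :=
    φ.card_edgeFinset_eq
  set N' := Fintype.card (Fin N) with hN'
  have hNN' : N' = N := Fintype.card_fin N
  have hr' : r ≤ N' ∧ 6 * r ≤ N' := by omega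
  have hdeg : 2 * #(turanGraph N' r).edgeFinset ≤ N' * (N' - N' / r) := by
    rw [← SimpleGraph.sum_degrees_eq_twice_card_edges]
    calc ∑ v, (turanGraph N' r).degree v ≤ ∑ _v : Fin N', (N' - N' / r) :=
          Finset.sum_le_sum (fun v _ => turanGraph_degree_le hr hr'.1 v)
      _ = N' * (N' - N' / r) := by
          rw [Finset.sum_const, Finset.card_univ, Fintype.card_fin, smul_eq_mul]
  have hq : 6 ≤ N' / r := by
    rw [Nat.le_div_iff_mul_le hr]; omega
  have hsplit : N' * (N' - 1) = N' * (N' - N' / r) + N' * (N' / r - 1) := by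
    rw [← Nat.mul_add]
    congr 1
    have : N' / r ≤ N' := Nat.div_le_self _ _
    omega
  have hchoose : N'.choose 2 * 2 = N' * (N' - 1) := by
    rw [Nat.choose_two_right, Nat.div_mul_cancel (two_dvd_mul_pred N')]
  have hqN : N' * 5 ≤ N' * (N' / r - 1) := Nat.mul_le_mul_left _ (by omega)
  have h6 : N' * 5 = 5 * N' := by ring
  have key : #(turanGraph N' r).edgeFinset + 2 * N' + 2 ≤ N'.choose 2 := by omega
  rw [hNN'] at key h2
  have hnc : G.edgeSet.ncard = #G.edgeFinset := Set.ncard_eq_toFinset_card' _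
  omega

lemma choose_two_lb {N : ℕ} (hN : 7 ≤ N) : 2 * N + 2 ≤ N.choose 2 := by
  have h1 : N * 6 ≤ N * (N - 1) := Nat.mul_le_mul_left N (by omega)
  have h2 : N.choose 2 * 2 = N * (N - 1) := by
    rw [Nat.choose_two_right, Nat.div_mul_cancel (two_dvd_mul_pred N)]
  have h3 : N * 6 = 6 * N := by ring
  omega

lemma ncard_edgeSet_le_choose {N : ℕ} (G : SimpleGraph (Fin N)) :
    G.edgeSet.ncard ≤ N.choose 2 := by
  classical
  rw [Set.ncard_eq_toFinset_card' G.edgeSet]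
  have := G.card_edgeFinset_le_card_choose_two
  rw [Fintype.card_fin] at this
  exact this

lemma exFam_le {W : Type*} (H : SimpleGraph W) {N B : ℕ}
    (h : ∀ G : SimpleGraph (Fin N),
      (∀ a b : W, H.Adj a b → ¬ ContainsCopy (H.induce ({a, b}ᶜ : Set W)) G) →
      G.edgeSet.ncard ≤ B) :
    exFam H N ≤ B := by
  apply csSup_le'
  rintro m ⟨G, hG, rfl⟩
  exact h G hG

lemma exists_copy {W : Type*} (H : SimpleGraph W) {N : ℕ} (G : SimpleGraph (Fin N))
    (h : exFam H N < G.edgeSet.ncard) :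
    ∃ a b : W, H.Adj a b ∧ ContainsCopy (H.induce ({a, b}ᶜ : Set W)) G := by
  by_contra hcon
  push_neg at hcon
  have hmem : G.edgeSet.ncard ∈ {m | ∃ G : SimpleGraph (Fin N),
      (∀ u v : W, H.Adj u v → ¬ ContainsCopy (H.induce ({u, v}ᶜ : Set W)) G) ∧
      G.edgeSet.ncard = m} := ⟨G, hcon, rfl⟩
  have hbdd : BddAbove {m | ∃ G : SimpleGraph (Fin N),
      (∀ u v : W, H.Adj u v → ¬ ContainsCopy (H.induce ({u, v}ᶜ : Set W)) G) ∧
      G.edgeSet.ncard = m} := by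
    refine ⟨N.choose 2, ?_⟩
    rintro m ⟨G', _, rfl⟩
    exact ncard_edgeSet_le_choose G'
  exact absurd (le_csSup hbdd hmem) (not_le.mpr h)

lemma hfree_cliqueFree {W : Type*} [Fintype W] (H : SimpleGraph W)
    {a b : W} (hab : H.Adj a b) {N : ℕ} (G : SimpleGraph (Fin N))
    (hfree : ∀ a b : W, H.Adj a b → ¬ ContainsCopy (H.induce ({a, b}ᶜ : Set W)) G) :
    G.CliqueFree (Fintype.card W - 2) := by
  classical
  intro t ht
  have hcard : Fintype.card ({a, b}ᶜ : Set W) = Fintype.card W - 2 := by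
    rw [Fintype.card_compl_set]
    congr 1
    rw [← Set.toFinset_card]
    simp [Set.toFinset_insert, Set.toFinset_singleton, hab.ne]
  have hcard2 : Fintype.card ({a, b}ᶜ : Set W) = Fintype.card (↥t) := by
    rw [hcard, Fintype.card_coe, ht.2]
  let φ := Fintype.equivOfCardEq hcard2
  apply hfree a b hab
  refine ⟨fun p => (φ p).1, Subtype.val_injective.comp φ.injective, ?_⟩
  intro p q hpq
  have hne : p ≠ q := fun h => (H.irrefl (h ▸ hpq))
  have hφ : φ p ≠ φ q := fun h => hne (φ.injective h)
  exact ht.1 (φ p).2 (φ q).2 (fun h => hφ (Subtype.val_injective h))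

lemma fH_mem {W : Type*} [Fintype W] (H : SimpleGraph W) (hH : H.edgeSet.Nonempty) :
    ∀ N ∈ ({fH H - 1, fH H} : Set ℕ),
      (exFam H N : ℤ) ≤ (N.choose 2 : ℤ) - 2 * N - 2 := by
  obtain ⟨e, he⟩ := hH
  induction e with
  | h a b =>
  have hab : H.Adj a b := he
  set m := Fintype.card W with hm
  have hnat : ∀ N : ℕ, 6 * (m - 3) ≤ N → 7 ≤ N → exFam H N + 2 * N + 2 ≤ N.choose 2 := by
    intro N h6 h7
    rcases le_or_gt m 3 with hm3 | hm4
    · -- every hfree graph would be cliquefree 1; impossible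
      have : exFam H N ≤ 0 := by
        apply exFam_le
        intro G hG
        exfalso
        have hcf : G.CliqueFree (m - 2) := hfree_cliqueFree H hab G hG
        have hcf1 : G.CliqueFree 1 := hcf.mono (by omega)
        exact hcf1 {⟨0, by omega⟩} (by simp [SimpleGraph.isNClique_iff, SimpleGraph.IsClique])
      have := choose_two_lb h7
      omega
    · have hr : 0 < m - 3 := by omega
      have hb : exFam H N ≤ N.choose 2 - (2 * N + 2) := by
        apply exFam_le
        intro G hG
        have hcf : G.CliqueFree (m - 2) := hfree_cliqueFree H hab G hG
        have hcf' : G.CliqueFree ((m - 3) + 1) := by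
          have : m - 2 = (m - 3) + 1 := by omega
          rwa [this] at hcf
        have := turan_bound hr h6 G hcf'
        omega
      have := choose_two_lb h7
      omega
  have hne : ({n : ℕ | ∀ N ∈ ({n - 1, n} : Set ℕ),
      (exFam H N : ℤ) ≤ (N.choose 2 : ℤ) - 2 * N - 2}).Nonempty := by
    refine ⟨6 * (m - 3) + 8, ?_⟩
    intro N hN
    have hN' : N = 6 * (m - 3) + 7 ∨ N = 6 * (m - 3) + 8 := by
      simp only [Set.mem_insert_iff, Set.mem_singleton_iff] at hN
      omega
    have h1 : exFam H N + 2 * N + 2 ≤ N.choose 2 := by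
      rcases hN' with h | h <;> exact hnat N (by omega) (by omega)
    omega
  have := Nat.sInf_mem hne
  exact this
end Aux

open Finset in
/-- Let `H` be a graph with at least one edge, let `F` be an edge-colored complete
graph of order `f(H) + 2` and `u ≠ v` two of its vertices. If `F - {u, v}` is
rainbow and the edges between `{u, v}` and the remaining vertices receive pairwise
distinct colors, then whatever the color of `uv` is, there is a rainbow copy of `H`
containing the edge `uv`. -/
theorem rainbow_copy_through_added_edge {W : Type*} [Fintype W] (H : SimpleGraph W)
    (hH : H.edgeSet.Nonempty) (c : Sym2 (Fin (fH H + 2)) → ℕ)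
    (u v : Fin (fH H + 2)) (huv : u ≠ v)
    (h1 : RainbowOn c {e | ¬ e.IsDiag ∧ u ∉ e ∧ v ∉ e})
    (h2 : RainbowOn c {e | ∃ x, x ≠ u ∧ x ≠ v ∧ (e = s(u, x) ∨ e = s(v, x))}) :
    IsRainbowCopyThrough H (⊤ : SimpleGraph (Fin (fH H + 2))) c s(u, v) := by
  classical
  have hmem := fH_mem H hH (fH H - 1) (Set.mem_insert _ _)
  have hbound : exFam H ((fH H) - 1) + 2 * ((fH H) - 1) + 2 ≤ ((fH H) - 1).choose 2 := by omega
  -- the available vertex set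
  set Rf : Finset (Fin ((fH H) + 2)) := Finset.univ \ {u, v} with hRf
  have hRfcard : #Rf = (fH H) := by
    rw [hRf, Finset.card_sdiff_of_subset (Finset.subset_univ _), Finset.card_univ, Fintype.card_fin,
      Finset.card_insert_of_notMem (by simpa using huv), Finset.card_singleton]
    omega
  set Bad : Finset (Fin ((fH H) + 2)) :=
    Rf.filter (fun x => c s(u, x) = c s(u, v) ∨ c s(v, x) = c s(u, v)) with hBadDef
  have hBad : #Bad ≤ 1 := by
    rw [Finset.card_le_one]
    intro x hx y hy
    simp only [hBadDef, hRf, Finset.mem_filter, Finset.mem_sdiff, Finset.mem_univ, true_and,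
      Finset.mem_insert, Finset.mem_singleton, not_or] at hx hy
    obtain ⟨⟨hxu, hxv⟩, hx2⟩ := hx
    obtain ⟨⟨hyu, hyv⟩, hy2⟩ := hy
    rcases hx2 with hx2 | hx2 <;> rcases hy2 with hy2 | hy2
    · have := h2 s(u, x) ⟨x, hxu, hxv, Or.inl rfl⟩ s(u, y) ⟨y, hyu, hyv, Or.inl rfl⟩
        (hx2.trans hy2.symm)
      rw [Sym2.eq_iff] at this
      rcases this with ⟨-, h⟩ | ⟨-, h⟩
      · exact h
      · exact absurd h hxu
    · have := h2 s(u, x) ⟨x, hxu, hxv, Or.inl rfl⟩ s(v, y) ⟨y, hyu, hyv, Or.inr rfl⟩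
        (hx2.trans hy2.symm)
      rw [Sym2.eq_iff] at this
      rcases this with ⟨h, -⟩ | ⟨-, h⟩
      · exact absurd h huv
      · exact absurd h hxv
    · have := h2 s(v, x) ⟨x, hxu, hxv, Or.inr rfl⟩ s(u, y) ⟨y, hyu, hyv, Or.inl rfl⟩
        (hx2.trans hy2.symm)
      rw [Sym2.eq_iff] at this
      rcases this with ⟨h, -⟩ | ⟨-, h⟩
      · exact absurd h.symm huv
      · exact absurd h hxu
    · have := h2 s(v, x) ⟨x, hxu, hxv, Or.inr rfl⟩ s(v, y) ⟨y, hyu, hyv, Or.inr rfl⟩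
        (hx2.trans hy2.symm)
      rw [Sym2.eq_iff] at this
      rcases this with ⟨-, h⟩ | ⟨-, h⟩
      · exact h
      · exact absurd h hxv
  have hsdcard : (fH H) - 1 ≤ #(Rf \ Bad) := by
    have := Finset.le_card_sdiff Bad Rf
    omega
  obtain ⟨S, hSsub, hScard⟩ := Finset.exists_subset_card_eq hsdcard
  have hSmem : ∀ x ∈ S, x ≠ u ∧ x ≠ v ∧ c s(u, x) ≠ c s(u, v) ∧ c s(v, x) ≠ c s(u, v) := by
    intro x hx
    have hx' := hSsub hx
    simp only [Finset.mem_sdiff, hBadDef, hRf, Finset.mem_filter, Finset.mem_univ, true_and,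
      Finset.mem_insert, Finset.mem_singleton, not_or, not_and] at hx'
    obtain ⟨⟨hxu, hxv⟩, hx2⟩ := hx'
    have := hx2 ⟨hxu, hxv⟩
    exact ⟨hxu, hxv, this.1, this.2⟩
  set Forb : Finset ℕ :=
    insert (c s(u, v)) ((S.image fun x => c s(u, x)) ∪ (S.image fun x => c s(v, x)))
    with hForbDef
  have hForb : #Forb ≤ 2 * ((fH H) - 1) + 1 := by
    have hc1 : #Forb ≤
        #((S.image fun x => c s(u, x)) ∪ (S.image fun x => c s(v, x))) + 1 :=
      Finset.card_insert_le _ _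
    have hc2 := Finset.card_union_le (S.image fun x => c s(u, x))
      (S.image fun x => c s(v, x))
    have hc3 := Finset.card_image_le (s := S) (f := fun x => c s(u, x))
    have hc4 := Finset.card_image_le (s := S) (f := fun x => c s(v, x))
    rw [hScard] at hc3 hc4
    omega
  set G₀ := colGraph c S Forb with hG₀
  have hScoe : Fintype.card {x // x ∈ S} = (fH H) - 1 := by rw [Fintype.card_coe, hScard]
  have htop : #(⊤ : SimpleGraph {x // x ∈ S}).edgeFinset = ((fH H) - 1).choose 2 := by
    rw [card_edgeFinset_top_eq_card_choose_two, hScoe]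
  set D := (⊤ : SimpleGraph {x // x ∈ S}).edgeFinset.filter
    (fun e => c (e.map Subtype.val) ∈ Forb) with hDdef
  have hGD : G₀.edgeFinset = (⊤ : SimpleGraph {x // x ∈ S}).edgeFinset \ D := by
    ext e
    induction e with
    | h x y =>
      simp only [hDdef, Finset.mem_sdiff, Finset.mem_filter, SimpleGraph.mem_edgeFinset,
        SimpleGraph.mem_edgeSet, SimpleGraph.top_adj, Sym2.map_pair_eq, hG₀, colGraph_adj]
      tauto
  have hdom : ∀ e ∈ D, ¬ (Sym2.map Subtype.val e).IsDiag ∧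
      u ∉ Sym2.map Subtype.val e ∧ v ∉ Sym2.map Subtype.val e := by
    intro e he
    rw [hDdef, Finset.mem_filter] at he
    obtain ⟨he1, -⟩ := he
    induction e with
    | h x y =>
      rw [SimpleGraph.mem_edgeFinset, SimpleGraph.mem_edgeSet, SimpleGraph.top_adj] at he1
      refine ⟨?_, ?_, ?_⟩
      · rw [Sym2.map_pair_eq, Sym2.mk_isDiag_iff]
        exact fun h => he1 (Subtype.val_injective h)
      · rw [Sym2.map_pair_eq, Sym2.mem_iff]
        rintro (h | h)
        · exact (hSmem x.1 x.2).1 h.symm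
        · exact (hSmem y.1 y.2).1 h.symm
      · rw [Sym2.map_pair_eq, Sym2.mem_iff]
        rintro (h | h)
        · exact (hSmem x.1 x.2).2.1 h.symm
        · exact (hSmem y.1 y.2).2.1 h.symm
  have hD : #D ≤ #Forb := by
    apply Finset.card_le_card_of_injOn (fun e => c (e.map Subtype.val))
    · intro e he
      rw [hDdef, Finset.mem_coe, Finset.mem_filter] at he
      exact he.2
    · intro e1 he1 e2 he2 hce
      have h1d := hdom e1 he1
      have h2d := hdom e2 he2
      have := h1 _ h1d _ h2d hce
      exact Sym2.map.injective Subtype.val_injective this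
  have hG₀card : #G₀.edgeFinset = ((fH H) - 1).choose 2 - #D := by
    rw [hGD, Finset.card_sdiff_of_subset (Finset.filter_subset _ _), htop]
  set φ : {x // x ∈ S} ≃ Fin ((fH H) - 1) := Fintype.equivFinOfCardEq hScoe with hφ
  set G₁ : SimpleGraph (Fin ((fH H) - 1)) := G₀.comap φ.symm with hG₁
  have hE01 : #G₀.edgeFinset = #G₁.edgeFinset := by
    refine SimpleGraph.Iso.card_edgeFinset_eq ⟨φ, ?_⟩
    intro p q
    show G₀.Adj (φ.symm (φ p)) (φ.symm (φ q)) ↔ G₀.Adj p q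
    rw [Equiv.symm_apply_apply, Equiv.symm_apply_apply]
  have hgt : exFam H ((fH H) - 1) < G₁.edgeSet.ncard := by
    have hnc : G₁.edgeSet.ncard = #G₁.edgeFinset := Set.ncard_eq_toFinset_card' _
    omega
  obtain ⟨a, b, hab, g', hg'inj, hg'adj⟩ := exists_copy H G₁ hgt
  set g : ({a, b}ᶜ : Set W) → {x // x ∈ S} := fun p => φ.symm (g' p) with hg
  have hginj : Function.Injective g := fun p q h => hg'inj (φ.symm.injective h)
  have hgadj : ∀ p q : ({a, b}ᶜ : Set W), H.Adj p.1 q.1 → G₀.Adj (g p) (g q) := by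
    intro p q hpq
    exact hg'adj (show (H.induce ({a, b}ᶜ : Set W)).Adj p q from hpq)
  have hmemW : ∀ w : W, w ≠ a → w ≠ b → w ∈ ({a, b}ᶜ : Set W) := by
    intro w hwa hwb
    simp [hwa, hwb]
  set f : W → Fin ((fH H) + 2) := fun w =>
    if hwa : w = a then u else if hwb : w = b then v else (g ⟨w, hmemW w hwa hwb⟩).1 with hf
  have hfa : f a = u := by simp [hf]
  have hfb : f b = v := by
    have hba : b ≠ a := hab.ne'
    simp [hf, hba]
  have hfw : ∀ (w : W) (hwa : w ≠ a) (hwb : w ≠ b), f w = (g ⟨w, hmemW w hwa hwb⟩).1 := by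
    intro w hwa hwb
    simp [hf, hwa, hwb]
  have hgS : ∀ p : ({a, b}ᶜ : Set W), (g p).1 ∈ S := fun p => (g p).2
  have val3 : ∀ (w : W) (hwa : w ≠ a) (hwb : w ≠ b), f w ∈ S := by
    intro w hwa hwb
    rw [hfw w hwa hwb]
    exact hgS _
  have hfinj : Function.Injective f := by
    intro x y hxy
    by_cases hxa : x = a <;> by_cases hya : y = a
    · rw [hxa, hya]
    · have hfx : f x = u := by rw [hxa, hfa]
      by_cases hyb : y = b
      · have hfy : f y = v := by rw [hyb, hfb]
        exact absurd ((hfx.symm.trans hxy).trans hfy) huv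
      · exact absurd (hxy.symm.trans hfx) (hSmem _ (val3 y hya hyb)).1
    · have hfy : f y = u := by rw [hya, hfa]
      by_cases hxb : x = b
      · have hfx : f x = v := by rw [hxb, hfb]
        exact absurd ((hfy.symm.trans hxy.symm).trans hfx) huv
      · exact absurd (hxy.trans hfy) (hSmem _ (val3 x hxa hxb)).1
    · by_cases hxb : x = b <;> by_cases hyb : y = b
      · rw [hxb, hyb]
      · have hfx : f x = v := by rw [hxb, hfb]
        exact absurd (hxy.symm.trans hfx) (hSmem _ (val3 y hya hyb)).2.1
      · have hfy : f y = v := by rw [hyb, hfb]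
        exact absurd (hxy.trans hfy) (hSmem _ (val3 x hxa hxb)).2.1
      · rw [hfw x hxa hxb, hfw y hya hyb] at hxy
        exact congrArg Subtype.val (hginj (Subtype.val_injective hxy))
  have hclass : ∀ x y : W, H.Adj x y →
      s(f x, f y) = s(u, v) ∨
      ((∃ w ∈ S, s(f x, f y) = s(u, w) ∨ s(f x, f y) = s(v, w)) ∧
        c s(f x, f y) ∈ Forb ∧ c s(f x, f y) ≠ c s(u, v)) ∨
      ((¬ (s(f x, f y)).IsDiag ∧ u ∉ s(f x, f y) ∧ v ∉ s(f x, f y)) ∧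
        c s(f x, f y) ∉ Forb) := by
    intro x y hxy
    have hne : x ≠ y := hxy.ne
    have humem : ∀ w ∈ S, c s(u, w) ∈ Forb := by
      intro w hw
      exact Finset.mem_insert_of_mem (Finset.mem_union_left _
        (Finset.mem_image_of_mem _ hw))
    have hvmem : ∀ w ∈ S, c s(v, w) ∈ Forb := by
      intro w hw
      exact Finset.mem_insert_of_mem (Finset.mem_union_right _
        (Finset.mem_image_of_mem _ hw))
    by_cases hxa : x = a
    · by_cases hyb : y = b
      · left
        rw [hxa, hyb, hfa, hfb]
      · by_cases hya : y = a
        · exact absurd (hxa.trans hya.symm) hne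
        · right; left
          rw [hxa, hfa, hfw y hya hyb]
          exact ⟨⟨_, hgS _, Or.inl rfl⟩, humem _ (hgS _), (hSmem _ (hgS _)).2.2.1⟩
    · by_cases hxb : x = b
      · by_cases hya : y = a
        · left
          rw [hxb, hya, hfb, hfa, Sym2.eq_swap]
        · by_cases hyb : y = b
          · exact absurd (hxb.trans hyb.symm) hne
          · right; left
            rw [hxb, hfb, hfw y hya hyb]
            exact ⟨⟨_, hgS _, Or.inr rfl⟩, hvmem _ (hgS _), (hSmem _ (hgS _)).2.2.2⟩
      · by_cases hya : y = a
        · right; left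
          rw [hya, hfa, hfw x hxa hxb, Sym2.eq_swap]
          exact ⟨⟨_, hgS _, Or.inl rfl⟩, humem _ (hgS _), (hSmem _ (hgS _)).2.2.1⟩
        · by_cases hyb : y = b
          · right; left
            rw [hyb, hfb, hfw x hxa hxb, Sym2.eq_swap]
            exact ⟨⟨_, hgS _, Or.inr rfl⟩, hvmem _ (hgS _), (hSmem _ (hgS _)).2.2.2⟩
          · right; right
            obtain ⟨hne', hnotin⟩ := hgadj ⟨x, hmemW x hxa hxb⟩ ⟨y, hmemW y hya hyb⟩ hxy
            rw [hfw x hxa hxb, hfw y hya hyb]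
            refine ⟨⟨?_, ?_, ?_⟩, hnotin⟩
            · rw [Sym2.mk_isDiag_iff]
              exact fun h => hne' (Subtype.val_injective h)
            · rw [Sym2.mem_iff]
              rintro (h | h)
              · exact (hSmem _ (hgS _)).1 h.symm
              · exact (hSmem _ (hgS _)).1 h.symm
            · rw [Sym2.mem_iff]
              rintro (h | h)
              · exact (hSmem _ (hgS _)).2.1 h.symm
              · exact (hSmem _ (hgS _)).2.1 h.symm
  refine ⟨f, hfinj, ?_, ?_, a, b, hab, by rw [hfa, hfb]⟩
  · intro x y hxy
    exact fun h => hxy.ne (hfinj h)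
  · intro x y x' y' hxy hxy' hc
    have key : s(f x, f y) = s(f x', f y') := by
      rcases hclass x y hxy with hA | hA | hA <;> rcases hclass x' y' hxy' with hB | hB | hB
      · rw [hA, hB]
      · rw [hA] at hc
        exact absurd hc.symm hB.2.2
      · rw [hA] at hc
        exact absurd (hc ▸ Finset.mem_insert_self _ _) hB.2
      · rw [hB] at hc
        exact absurd hc hA.2.2
      · obtain ⟨w1, hw1, hor1⟩ := hA.1
        obtain ⟨w2, hw2, hor2⟩ := hB.1
        exact h2 _ ⟨w1, (hSmem _ hw1).1, (hSmem _ hw1).2.1, hor1⟩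
          _ ⟨w2, (hSmem _ hw2).1, (hSmem _ hw2).2.1, hor2⟩ hc
      · exact absurd (hc ▸ hA.2.1) hB.2
      · rw [hB] at hc
        exact absurd (hc.symm ▸ Finset.mem_insert_self _ _) hA.2
      · rw [hc] at hA
        exact absurd hB.2.1 hA.2
      · exact h1 _ hA.1 _ hB.1 hc
    have hmap : Sym2.map f s(x, y) = Sym2.map f s(x', y') := by
      rw [Sym2.map_pair_eq, Sym2.map_pair_eq]
      exact key
    exact Sym2.map.injective hfinj hmap
end

section
/- Let H be a graph with E(H) ≠ ∅, let F be an edge-colored complete graph on n ≥ 5|V(H)| vertices, and let u, v be two distinct vertices of F. Suppose the edge-coloring of F is such that the induced edge-colored subgraph F − {u, v} is rainbow, and all the edges between {u, v} and V(F) \ {u, v} receive pairwise distinct colors (i.e., they form a rainbow copy of K_{2, n−2}). Then for every color assigned to the edge uv, F contains a rainbow copy of H containing the edge uv. -/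
/-!
Send an edge `ab` of `H` to `uv` and the other vertices of `H` into a set `S` avoiding `u, v`.
The colouring is rainbow on `S ∪ {u, v}` as soon as (i) no vertex of `S` is joined to `u` or `v`
in the colour of `uv`, (ii) no edge inside `S` has the colour of `uv`, and (iii) for `x ∈ S` no
edge inside `S` has the colour of `ux` or of `vx`. Since every colour occurs at most once among
the edges at `{u, v}` and at most once inside `F - {u, v}`, (i) and (ii) exclude at most two
vertices. For (iii), let `x` point to an endpoint other than `x` of the inner edge coloured
like `ux`, and of the one coloured like `vx`. Independent sets of this digraph of out-degree at
most `2` satisfy (iii), and repeatedly keeping a vertex of total degree at most `4` while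
deleting its neighbours gives one of size at least `(n - 4) / 5 ≥ |V(H)| - 2`.
-/

open SimpleGraph

open Finset

namespace Finset

variable {V : Type*} [DecidableEq V] {out : V → Finset V} {d : ℕ}

lemma exists_mem_card_out_add_card_in_le (hout : ∀ x, #(out x) ≤ d) {Q : Finset V}
    (hQ : Q.Nonempty) :
    ∃ q ∈ Q, #{y ∈ Q | y ∈ out q} + #{y ∈ Q | q ∈ out y} ≤ 2 * d := by
  have hin : ∑ q ∈ Q, #{y ∈ Q | q ∈ out y} = ∑ q ∈ Q, #{y ∈ Q | y ∈ out q} :=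
    (sum_card_bipartiteAbove_eq_sum_card_bipartiteBelow (fun q y => y ∈ out q)).symm
  have hsum : ∑ q ∈ Q, #{y ∈ Q | y ∈ out q} ≤ ∑ _q ∈ Q, d :=
    sum_le_sum fun q _ => (card_le_card fun _ hy => (mem_filter.1 hy).2).trans (hout q)
  refine exists_le_of_sum_le hQ ?_
  rw [sum_add_distrib, hin, sum_const, smul_eq_mul]
  rw [sum_const, smul_eq_mul] at hsum
  linarith

lemma exists_independent_subset_of_card_out_le (hout : ∀ x, #(out x) ≤ d) (Q : Finset V) :
    ∃ S ⊆ Q, #Q ≤ (2 * d + 1) * #S ∧ ∀ x ∈ S, ∀ y ∈ S, x ≠ y → y ∉ out x := by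
  induction Q using strongInduction with
  | _ Q ih =>
  obtain rfl | hQ := Q.eq_empty_or_nonempty
  · exact ⟨∅, by simp⟩
  obtain ⟨q, hqQ, hq⟩ := exists_mem_card_out_add_card_in_le hout hQ
  set R := insert q ({y ∈ Q | y ∈ out q} ∪ {y ∈ Q | q ∈ out y})
  have hR : #R ≤ 2 * d + 1 := (card_insert_le _ _).trans (by grw [card_union_le]; omega)
  have hRQ : R ⊆ Q := insert_subset hqQ (union_subset (filter_subset _ _) (filter_subset _ _))
  have hqR : q ∈ R := mem_insert_self _ _
  obtain ⟨S, hSQ, hcard, hS⟩ := ih (Q \ R) (sdiff_ssubset hRQ ⟨q, hqR⟩)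
  have hSR : ∀ y ∈ S, y ∈ Q ∧ y ∉ R := fun y hy => mem_sdiff.1 (hSQ hy)
  refine ⟨insert q S, insert_subset hqQ fun y hy => (hSR y hy).1, ?_, ?_⟩
  · have hqS : q ∉ S := fun h => (hSR q h).2 hqR
    have := card_sdiff_add_card_eq_card hRQ
    rw [card_insert_of_notMem hqS]
    nlinarith
  · simp only [mem_insert]
    rintro x (rfl | hx) y (rfl | hy) hxy
    · exact absurd rfl hxy
    · exact fun h => (hSR y hy).2 (by simp [R, (hSR y hy).1, h])
    · exact fun h => (hSR x hx).2 (by simp [R, (hSR x hx).1, h])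
    · exact hS x hx y hy hxy

end Finset

lemma rainbowOn_singleton {V : Type*} {c : Sym2 V → ℕ} (e : Sym2 V) : RainbowOn c {e} :=
  fun _ he _ he' _ => he.trans he'.symm

namespace RainbowOn

variable {V : Type*} {c : Sym2 V → ℕ} {S T : Set (Sym2 V)}

lemma mono (hT : RainbowOn c T) (hST : S ⊆ T) : RainbowOn c S :=
  fun e he e' he' => hT e (hST he) e' (hST he')

lemma union (hS : RainbowOn c S) (hT : RainbowOn c T) (hST : ∀ e ∈ S, ∀ e' ∈ T, c e ≠ c e') :
    RainbowOn c (S ∪ T) := by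
  rintro e (he | he) e' (he' | he') hcol
  exacts [hS e he e' he' hcol, absurd hcol (hST e he e' he'),
    absurd hcol.symm (hST e' he' e he), hT e he e' he' hcol]

lemma exists_card_le_one_transversal (hS : RainbowOn c S) (hdiag : ∀ e ∈ S, ¬ e.IsDiag)
    (col : ℕ) (x : V) :
    ∃ K : Finset V, #K ≤ 1 ∧ ∀ e ∈ S, c e = col → ∃ w ∈ K, w ∈ e ∧ w ≠ x := by
  by_cases h : ∃ e ∈ S, c e = col
  · obtain ⟨e₀, he₀, hcol₀⟩ := h
    obtain ⟨w, hw, hwx⟩ : ∃ w ∈ e₀, w ≠ x := by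
      induction e₀ using Sym2.ind with | _ p q =>
      by_cases hp : p = x
      · exact ⟨q, Sym2.mem_mk_right p q,
          fun hq => hdiag _ he₀ (Sym2.mk_isDiag_iff.2 (hp.trans hq.symm))⟩
      · exact ⟨p, Sym2.mem_mk_left p q, hp⟩
    refine ⟨{w}, card_singleton w ▸ le_rfl, fun e he hcol => ⟨w, mem_singleton_self w, ?_, hwx⟩⟩
    rwa [← hS e₀ he₀ e he (hcol₀.trans hcol.symm)]
  · exact ⟨∅, by simp, fun e he hcol => absurd ⟨e, he, hcol⟩ h⟩

end RainbowOn

lemma Function.Embedding.exists_apply_eq_apply_eq_of_card_le {W V : Type*} [Fintype W]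
    {T : Finset V} (hcard : Fintype.card W ≤ #T)
    {a b : W} (hab : a ≠ b) {u v : V} (hu : u ∈ T) (hv : v ∈ T) (huv : u ≠ v) :
    ∃ f : W ↪ V, f a = u ∧ f b = v ∧ ∀ w, f w ∈ T := by
  classical
  obtain ⟨g⟩ : Nonempty (W ↪ T) :=
    Function.Embedding.nonempty_of_card_le (by simpa using hcard)
  let g' := (g.setValue a ⟨u, hu⟩).setValue b ⟨v, hv⟩
  refine ⟨g'.trans (Function.Embedding.subtype _), ?_, ?_, fun w => (g' w).2⟩
  · simp [g', Function.Embedding.setValue_eq_of_ne hab, huv]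
  · simp [g']

lemma isRainbowCopyThrough_top_of_rainbowOn {W V : Type*} [Fintype W] {H : SimpleGraph W}
    {a b : W} (hab : H.Adj a b) {c : Sym2 V → ℕ} {T : Finset V}
    (hT : RainbowOn c {e | ¬ e.IsDiag ∧ ∀ w ∈ e, w ∈ T}) (hcard : Fintype.card W ≤ #T)
    {u v : V} (hu : u ∈ T) (hv : v ∈ T) (huv : u ≠ v) :
    IsRainbowCopyThrough H ⊤ c s(u, v) := by
  obtain ⟨f, rfl, rfl, hfT⟩ :=
    Function.Embedding.exists_apply_eq_apply_eq_of_card_le hcard hab.ne hu hv huv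
  have hmem : ∀ ⦃p q⦄, H.Adj p q →
      s(f p, f q) ∈ {e : Sym2 V | ¬ e.IsDiag ∧ ∀ w ∈ e, w ∈ T} :=
    fun p q hpq => ⟨by simpa using hpq.ne, by simp [hfT]⟩
  refine ⟨f, f.injective, fun p q hpq => by simpa using hpq.ne, ?_, a, b, hab, rfl⟩
  intro p q p' q' hpq hpq' hcol
  apply Sym2.map.injective f.injective
  simpa using hT _ (hmem hpq) _ (hmem hpq') hcol

section

variable {V : Type*} {c : Sym2 V → ℕ} {u v : V}

lemma card_filter_cross_color_le_one [Fintype V] [DecidableEq V]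
    (h2 : RainbowOn c {e | ∃ x, x ≠ u ∧ x ≠ v ∧ (e = s(u, x) ∨ e = s(v, x))}) (col : ℕ) :
    #{x | x ≠ u ∧ x ≠ v ∧ (c s(u, x) = col ∨ c s(v, x) = col)} ≤ 1 := by
  rw [card_le_one]
  simp only [mem_filter, mem_univ, true_and]
  rintro x ⟨hxu, hxv, hx⟩ y ⟨hyu, hyv, hy⟩
  rcases hx with hx | hx <;> rcases hy with hy | hy <;>
  · have := h2 _ ⟨x, hxu, hxv, by simp⟩ _ ⟨y, hyu, hyv, by simp⟩ (hx.trans hy.symm)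
    grind [Sym2.eq_iff]

lemma rainbowOn_edges_insert_insert [DecidableEq V]
    (h1 : RainbowOn c {e | ¬ e.IsDiag ∧ u ∉ e ∧ v ∉ e})
    (h2 : RainbowOn c {e | ∃ x, x ≠ u ∧ x ≠ v ∧ (e = s(u, x) ∨ e = s(v, x))})
    {S : Finset V} (huS : u ∉ S) (hvS : v ∉ S)
    (hcross : ∀ x ∈ S, c s(u, x) ≠ c s(u, v) ∧ c s(v, x) ≠ c s(u, v))
    (hinner : ∀ y ∈ S, ∀ z ∈ S, y ≠ z → c s(y, z) ≠ c s(u, v))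
    (hcross_inner : ∀ x ∈ S, ∀ y ∈ S, ∀ z ∈ S, y ≠ z →
      c s(u, x) ≠ c s(y, z) ∧ c s(v, x) ≠ c s(y, z)) :
    RainbowOn c {e | ¬ e.IsDiag ∧ ∀ w ∈ e, w ∈ insert u (insert v S)} := by
  have hS : ∀ x ∈ S, x ≠ u ∧ x ≠ v := fun x hx => ⟨by grind, by grind⟩
  set crossS := {e | ∃ x ∈ S, e = s(u, x) ∨ e = s(v, x)}
  set innerS := {e | ∃ y ∈ S, ∃ z ∈ S, y ≠ z ∧ e = s(y, z)}
  have hsub : {e | ¬ e.IsDiag ∧ ∀ w ∈ e, w ∈ insert u (insert v S)} ⊆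
      {s(u, v)} ∪ crossS ∪ innerS := by
    rintro e ⟨hdiag, he⟩
    induction e using Sym2.ind with | _ p q =>
    simp only [Sym2.mem_iff, forall_eq_or_imp, forall_eq, mem_insert, Sym2.mk_isDiag_iff]
      at he hdiag
    rcases he with ⟨rfl | rfl | hp, rfl | rfl | hq⟩
    · exact absurd rfl hdiag
    · exact Or.inl (Or.inl rfl)
    · exact Or.inl (Or.inr ⟨q, hq, Or.inl rfl⟩)
    · exact Or.inl (Or.inl Sym2.eq_swap)
    · exact absurd rfl hdiag
    · exact Or.inl (Or.inr ⟨q, hq, Or.inr rfl⟩)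
    · exact Or.inl (Or.inr ⟨p, hp, Or.inl Sym2.eq_swap⟩)
    · exact Or.inl (Or.inr ⟨p, hp, Or.inr Sym2.eq_swap⟩)
    · exact Or.inr ⟨p, hp, q, hq, hdiag, rfl⟩
  have hcrossS : RainbowOn c crossS :=
    h2.mono fun e ⟨x, hx, he⟩ => ⟨x, (hS x hx).1, (hS x hx).2, he⟩
  have hinnerS : RainbowOn c innerS := h1.mono fun e ⟨y, hy, z, hz, hyz, he⟩ => by
    subst he
    simp [hyz, (hS y hy).1.symm, (hS y hy).2.symm, (hS z hz).1.symm, (hS z hz).2.symm]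
  refine (((rainbowOn_singleton _).union hcrossS ?_).union hinnerS ?_).mono hsub
  · rintro _ rfl _ ⟨x, hx, rfl | rfl⟩
    exacts [(hcross x hx).1.symm, (hcross x hx).2.symm]
  · rintro _ (rfl | ⟨x, hx, rfl | rfl⟩) _ ⟨y, hy, z, hz, hyz, rfl⟩
    exacts [(hinner y hy z hz hyz).symm, (hcross_inner x hx y hy z hz hyz).1,
      (hcross_inner x hx y hy z hz hyz).2]

lemma color_ne_of_transversal {E : Set (Sym2 V)} {K : Finset V} {x : V} {col : ℕ}
    (hK : ∀ e ∈ E, c e = col → ∃ w ∈ K, w ∈ e ∧ w ≠ x) {S : Finset V}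
    (hKS : ∀ w ∈ S, w ≠ x → w ∉ K) {y z : V} (hy : y ∈ S) (hz : z ∈ S) (hyz : s(y, z) ∈ E) :
    c s(y, z) ≠ col := by
  intro hcol
  obtain ⟨w, hwK, hw, hwx⟩ := hK _ hyz hcol
  rcases Sym2.mem_iff.1 hw with rfl | rfl
  exacts [hKS w hy hwx hwK, hKS w hz hwx hwK]

lemma exists_finset_rainbowOn_edges [Fintype V] [DecidableEq V] (huv : u ≠ v)
    (h1 : RainbowOn c {e | ¬ e.IsDiag ∧ u ∉ e ∧ v ∉ e})
    (h2 : RainbowOn c {e | ∃ x, x ≠ u ∧ x ≠ v ∧ (e = s(u, x) ∨ e = s(v, x))}) :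
    ∃ T : Finset V, u ∈ T ∧ v ∈ T ∧ Fintype.card V + 6 ≤ 5 * #T ∧
      RainbowOn c {e | ¬ e.IsDiag ∧ ∀ w ∈ e, w ∈ T} := by
  have hdiag : ∀ e ∈ {e : Sym2 V | ¬ e.IsDiag ∧ u ∉ e ∧ v ∉ e}, ¬ e.IsDiag :=
    fun _ he => he.1
  set B₁ : Finset V :=
    {x | x ≠ u ∧ x ≠ v ∧ (c s(u, x) = c s(u, v) ∨ c s(v, x) = c s(u, v))}
  have hB₁ : #B₁ ≤ 1 := card_filter_cross_color_le_one h2 _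
  obtain ⟨B₂, hB₂, hB₂_hit⟩ := h1.exists_card_le_one_transversal hdiag (c s(u, v)) u
  choose K hK hK_hit using h1.exists_card_le_one_transversal hdiag
  let out x := K (c s(u, x)) x ∪ K (c s(v, x)) x
  have hout : ∀ x, #(out x) ≤ 2 := fun x =>
    (card_union_le _ _).trans (add_le_add (hK _ x) (hK _ x))
  obtain ⟨S, hSP, hcard, hindep⟩ :=
    exists_independent_subset_of_card_out_le hout (univ \ insert u (insert v (B₁ ∪ B₂)))
  have hS : ∀ x ∈ S, x ≠ u ∧ x ≠ v ∧ x ∉ B₁ ∧ x ∉ B₂ := fun x hx => by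
    simpa [not_or] using hSP hx
  have hinner_mem : ∀ y ∈ S, ∀ z ∈ S, y ≠ z →
      s(y, z) ∈ {e : Sym2 V | ¬ e.IsDiag ∧ u ∉ e ∧ v ∉ e} := fun y hy z hz hyz => by
    simp [hyz, (hS y hy).1.symm, (hS y hy).2.1.symm, (hS z hz).1.symm, (hS z hz).2.1.symm]
  refine ⟨insert u (insert v S), mem_insert_self _ _, mem_insert_of_mem (mem_insert_self _ _),
    ?_, rainbowOn_edges_insert_insert h1 h2 (fun h => (hS u h).1 rfl)
      (fun h => (hS v h).2.1 rfl) ?_ ?_ ?_⟩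
  · have hX : #(insert u (insert v (B₁ ∪ B₂))) ≤ 4 := by
      grw [card_insert_le, card_insert_le, card_union_le]
      omega
    rw [card_univ_sdiff] at hcard
    rw [card_insert_of_notMem (by simpa [huv] using fun h => (hS u h).1 rfl),
      card_insert_of_notMem fun h => (hS v h).2.1 rfl]
    omega
  · intro x hx
    simpa [B₁, (hS x hx).1, (hS x hx).2.1, not_or] using (hS x hx).2.2.1
  · exact fun y hy z hz hyz => color_ne_of_transversal hB₂_hit
      (fun w hw _ => (hS w hw).2.2.2) hy hz (hinner_mem y hy z hz hyz)
  · refine fun x hx y hy z hz hyz => ⟨Ne.symm ?_, Ne.symm ?_⟩ <;>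
    refine color_ne_of_transversal (hK_hit _ x) (fun w hw hwx hwK => ?_) hy hz
      (hinner_mem y hy z hz hyz)
    exacts [hindep x hx w hw hwx.symm (mem_union_left _ hwK),
      hindep x hx w hw hwx.symm (mem_union_right _ hwK)]

end

/-- Let `H` be a graph with at least one edge, let `F` be an edge-colored complete
graph on `n ≥ 5|V(H)|` vertices and `u ≠ v` two of its vertices. If `F - {u, v}` is
rainbow and the edges between `{u, v}` and the remaining vertices receive pairwise
distinct colors, then whatever the color of `uv` is, there is a rainbow copy of `H`
containing the edge `uv`. -/
theorem rainbow_copy_through_added_edge' {W : Type*} [Fintype W] (H : SimpleGraph W)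
    (hH : H.edgeSet.Nonempty) (n : ℕ) (hn : 5 * Fintype.card W ≤ n)
    (c : Sym2 (Fin n) → ℕ) (u v : Fin n) (huv : u ≠ v)
    (h1 : RainbowOn c {e | ¬ e.IsDiag ∧ u ∉ e ∧ v ∉ e})
    (h2 : RainbowOn c {e | ∃ x, x ≠ u ∧ x ≠ v ∧ (e = s(u, x) ∨ e = s(v, x))}) :
    IsRainbowCopyThrough H (⊤ : SimpleGraph (Fin n)) c s(u, v) := by
  obtain ⟨e, he⟩ := hH
  induction e using Sym2.ind with | _ a b =>
  obtain ⟨T, huT, hvT, hT, hrainbow⟩ := exists_finset_rainbowOn_edges huv h1 h2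
  refine isRainbowCopyThrough_top_of_rainbowOn (H.mem_edgeSet.1 he) hrainbow ?_ huT hvT huv
  rw [Fintype.card_fin] at hT
  omega
end

section
/- For any graph H with E(H) ≠ ∅, one has f(H) ≤ 5|V(H)|; that is, for every integer N ≥ 5|V(H)| − 1, every graph G on N vertices with exactly C(N,2) − 2N − 2 edges contains some member of ℋ as a subgraph, where ℋ := {H − {u, v} : uv ∈ E(H)}. -/
open SimpleGraph

open Finset in
private lemma aux_class_card_ge {N r : ℕ} (hr : 0 < r) (k i : ℕ) (hi : i < r)
    (h : i + (k - 1) * r < N) :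
    k ≤ #(univ.filter fun w : Fin N => w.val % r = i) := by
  have hN0 : 0 < N := by omega
  have key : ∀ j ∈ range k, (⟨(i + j * r) % N, Nat.mod_lt _ hN0⟩ : Fin N) ∈
      (univ.filter fun w : Fin N => w.val % r = i) := by
    intro j hj
    rw [mem_range] at hj
    have hlt : i + j * r < N := by
      have : j * r ≤ (k - 1) * r := Nat.mul_le_mul_right r (by omega)
      omega
    simp only [mem_filter, mem_univ, true_and]
    simp [Nat.mod_eq_of_lt hlt, Nat.add_mul_mod_self_right, Nat.mod_eq_of_lt hi]
  calc k = #(range k) := (card_range k).symm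
    _ ≤ _ := by
      apply card_le_card_of_injOn _ key
      intro j1 h1 j2 h2 heq
      simp only [mem_coe, mem_range] at h1 h2
      have hlt1 : i + j1 * r < N := by
        have : j1 * r ≤ (k - 1) * r := Nat.mul_le_mul_right r (by omega); omega
      have hlt2 : i + j2 * r < N := by
        have : j2 * r ≤ (k - 1) * r := Nat.mul_le_mul_right r (by omega); omega
      have : i + j1 * r = i + j2 * r := by
        have := congrArg Fin.val heq
        simpa [Nat.mod_eq_of_lt hlt1, Nat.mod_eq_of_lt hlt2] using this
      exact Nat.eq_of_mul_eq_mul_right hr (by omega)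

open Finset in
private lemma aux_turan_deg_le {N r : ℕ} (v : Fin N) :
    (turanGraph N r).degree v ≤
      N - #(univ.filter fun w : Fin N => w.val % r = v.val % r) := by
  have hsub : (turanGraph N r).neighborFinset v ⊆
      (univ.filter fun w : Fin N => w.val % r = v.val % r)ᶜ := by
    intro w hw
    rw [mem_neighborFinset] at hw
    simp only [Finset.mem_compl, mem_filter, mem_univ, true_and]
    exact fun h => hw (h.symm)
  calc (turanGraph N r).degree v = #((turanGraph N r).neighborFinset v) :=
        (card_neighborFinset_eq_degree _ _).symm
    _ ≤ _ := card_le_card hsub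
    _ = _ := by rw [card_compl, Fintype.card_fin]

open Finset in
private lemma aux_turan_edge_bound {N r : ℕ} (hr : 0 < r) (hN : 5 * r + 4 ≤ N) :
    2 * #(turanGraph N r).edgeFinset + (5 * N + 6) ≤ N * N := by
  classical
  set C0 : Finset (Fin N) := univ.filter (fun w : Fin N => w.val % r = 0) with hC0
  have hc6 : 6 ≤ #C0 := aux_class_card_ge hr 6 0 hr (by omega)
  have hcN : #C0 ≤ N := by
    simpa using (card_le_card (subset_univ C0)).trans_eq (by simp)
  have hdeg : ∀ v : Fin N, (turanGraph N r).degree v ≤ N - 5 := by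
    intro v
    have h5 : 5 ≤ #(univ.filter fun w : Fin N => w.val % r = v.val % r) :=
      aux_class_card_ge hr 5 (v.val % r) (Nat.mod_lt _ hr) (by
        have := Nat.mod_lt v.val hr; omega)
    have := aux_turan_deg_le (r := r) v
    omega
  have hdeg0 : ∀ v ∈ C0, (turanGraph N r).degree v ≤ N - 6 := by
    intro v hv
    have hv0 : v.val % r = 0 := by simpa [hC0] using hv
    have := aux_turan_deg_le (r := r) v
    rw [hv0, ← hC0] at this
    omega
  have hsum : ∑ v, (turanGraph N r).degree v ≤ #C0 * (N - 6) + (N - #C0) * (N - 5) := by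
    rw [← Finset.sum_add_sum_compl C0]
    have h1 : ∑ v ∈ C0, (turanGraph N r).degree v ≤ #C0 * (N - 6) := by
      calc _ ≤ ∑ _v ∈ C0, (N - 6) := Finset.sum_le_sum hdeg0
        _ = #C0 * (N - 6) := by rw [Finset.sum_const, smul_eq_mul]
    have h2 : ∑ v ∈ C0ᶜ, (turanGraph N r).degree v ≤ (N - #C0) * (N - 5) := by
      calc _ ≤ ∑ _v ∈ C0ᶜ, (N - 5) := Finset.sum_le_sum (fun v _ => hdeg v)
        _ = (N - #C0) * (N - 5) := by
          rw [Finset.sum_const, smul_eq_mul, card_compl, Fintype.card_fin]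
    omega
  rw [← sum_degrees_eq_twice_card_edges] at *
  have h9 : 9 ≤ N := by omega
  nlinarith [hsum, hc6, hcN, Nat.sub_add_cancel (show 6 ≤ N by omega),
    Nat.sub_add_cancel (show 5 ≤ N by omega), Nat.sub_add_cancel hcN]

private lemma aux_two_mul_choose_two (n : ℕ) : 2 * n.choose 2 = n * (n - 1) := by
  rw [Nat.choose_two_right, Nat.mul_div_cancel']
  cases n with
  | zero => simp
  | succ k => simpa [Nat.mul_comm] using (Nat.even_mul_succ_self k).two_dvd

open Finset in
private lemma aux_ncard_edgeSet {V : Type*} [Fintype V] (G : SimpleGraph V)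
    [DecidableRel G.Adj] : G.edgeSet.ncard = #G.edgeFinset := by
  rw [Set.ncard_eq_toFinset_card']; congr 1

open Finset in
private lemma aux_exists_clique {m N : ℕ} (hm : 2 ≤ m) (hN : 5 * m - 1 ≤ N)
    (G : SimpleGraph (Fin N))
    (he : (N.choose 2 : ℤ) - 2 * N - 2 ≤ (G.edgeSet.ncard : ℤ)) :
    ∃ t : Finset (Fin N), G.IsNClique m t := by
  classical
  by_contra hcf
  push_neg at hcf
  have hcf' : G.CliqueFree ((m - 1) + 1) := by
    intro t ht; exact hcf t (by simpa [Nat.sub_add_cancel (by omega : 1 ≤ m)] using ht)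
  have hr : 0 < m - 1 := by omega
  have hT := (isTuranMaximal_turanGraph (n := N) hr).2 hcf'
  have hb := aux_turan_edge_bound hr (by omega : 5 * (m - 1) + 4 ≤ N)
  have hnc := aux_ncard_edgeSet G
  have hN9 : 9 ≤ N := by omega
  have h1 : (#G.edgeFinset : ℤ) ≤ #(turanGraph N (m - 1)).edgeFinset := by exact_mod_cast hT
  have h2 : 2 * (#(turanGraph N (m - 1)).edgeFinset : ℤ) + (5 * N + 6) ≤ N * N := by
    exact_mod_cast hb
  have h3 : 2 * (N.choose 2 : ℤ) = N * (N - 1) := by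
    have h := aux_two_mul_choose_two N
    zify [show 1 ≤ N by omega] at h
    linarith
  rw [hnc] at he
  linarith [he, h1, h2, h3]

private lemma aux_copy_of_clique {W : Type*} [Fintype W] (H : SimpleGraph W) (a b : W)
    {N : ℕ} {G : SimpleGraph (Fin N)} {t : Finset (Fin N)}
    (ht : G.IsNClique (Fintype.card W) t) :
    ContainsCopy (H.induce ({a, b}ᶜ : Set W)) G := by
  classical
  have h1 : Fintype.card ({a, b}ᶜ : Set W) ≤ Fintype.card W :=
    Fintype.card_le_of_injective _ Subtype.val_injective
  have h2 : Fintype.card { x // x ∈ t } = Fintype.card W := by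
    rw [Fintype.card_coe]; exact ht.2
  obtain ⟨emb⟩ : Nonempty (({a, b}ᶜ : Set W) ↪ { x // x ∈ t }) :=
    Function.Embedding.nonempty_of_card_le (by omega)
  refine ⟨fun x => (emb x : Fin N), ?_, ?_⟩
  · intro x y h
    exact emb.injective (Subtype.ext h)
  · intro x y hxy
    have hne : ((emb x : Fin N)) ≠ (emb y : Fin N) := by
      intro h
      exact hxy.ne (emb.injective (Subtype.ext h))
    exact ht.1 (by simp) (by simp) hne


/-- For any graph `H` with at least one edge, `f(H) ≤ 5|V(H)|`; that is, for every
`N ≥ 5|V(H)| - 1`, every graph on `N` vertices with exactly `C(N,2) - 2N - 2` edges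
contains some `H - {a, b}` (with `ab ∈ E(H)`) as a subgraph. -/
theorem fH_le_five_card {W : Type*} [Fintype W] (H : SimpleGraph W)
    (hH : H.edgeSet.Nonempty) :
    fH H ≤ 5 * Fintype.card W ∧
    ∀ N : ℕ, 5 * Fintype.card W - 1 ≤ N →
      ∀ G : SimpleGraph (Fin N),
        (G.edgeSet.ncard : ℤ) = (N.choose 2 : ℤ) - 2 * N - 2 →
        ∃ a b, H.Adj a b ∧ ContainsCopy (H.induce ({a, b}ᶜ : Set W)) G := by
  classical
  obtain ⟨e, he⟩ := hH
  obtain ⟨a0, b0, hab0⟩ : ∃ a b, H.Adj a b := by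
    induction e using Sym2.ind with
    | _ x y => exact ⟨x, y, (H.mem_edgeSet).mp he⟩
  have hm2 : 2 ≤ Fintype.card W := Fintype.one_lt_card_iff.mpr ⟨a0, b0, hab0.ne⟩
  have main : ∀ N : ℕ, 5 * Fintype.card W - 1 ≤ N → ∀ G : SimpleGraph (Fin N),
      (N.choose 2 : ℤ) - 2 * N - 2 ≤ (G.edgeSet.ncard : ℤ) →
      ∃ a b, H.Adj a b ∧ ContainsCopy (H.induce ({a, b}ᶜ : Set W)) G := by
    intro N hN G he'
    obtain ⟨t, ht⟩ := aux_exists_clique hm2 hN G he'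
    exact ⟨a0, b0, hab0, aux_copy_of_clique H a0 b0 ht⟩
  refine ⟨?_, fun N hN G hG => main N hN G (le_of_eq hG.symm)⟩
  apply Nat.sInf_le
  intro N hNmem
  simp only [Set.mem_insert_iff, Set.mem_singleton_iff] at hNmem
  have hN : 5 * Fintype.card W - 1 ≤ N := by rcases hNmem with h | h <;> omega
  have hN9 : 9 ≤ N := by omega
  have hch : 2 * N + 2 ≤ N.choose 2 := by
    have h := aux_two_mul_choose_two N
    zify [show 1 ≤ N by omega] at h ⊢
    nlinarith [show (9 : ℤ) ≤ (N : ℤ) by exact_mod_cast hN9]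
  have hsup : exFam H N ≤ N.choose 2 - (2 * N + 2) := by
    apply csSup_le'
    rintro k ⟨G, hno, hcard⟩
    by_contra hk
    push_neg at hk
    have hge : (N.choose 2 : ℤ) - 2 * N - 2 ≤ (G.edgeSet.ncard : ℤ) := by
      rw [hcard]
      have : N.choose 2 - (2 * N + 2) < k := hk
      zify [hch] at this
      linarith
    obtain ⟨a, b, hab, hcopy⟩ := main N hN G hge
    exact hno a b hab hcopy
  calc (exFam H N : ℤ) ≤ ((N.choose 2 - (2 * N + 2) : ℕ) : ℤ) := by exact_mod_cast hsup
    _ = (N.choose 2 : ℤ) - 2 * N - 2 := by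
      push_cast [Nat.cast_sub hch]
      ring
end

section
/- Let H be a non-empty graph containing a pendant edge, and let n be an integer with n > f(H) + 1. Then rwsat(n, H) ≤ C(f(H)+1, 2). Moreover, this bound is witnessed by the n-vertex edge-colored graph consisting of a rainbow complete graph on f(H)+1 vertices together with n − f(H) − 1 isolated vertices, which is weakly H-rainbow saturated. -/
open SimpleGraph

private lemma foldl_update_not_mem {α β : Type*} [DecidableEq α]
    (ps : List (α × β)) (c : α → β) (x : α) (hx : x ∉ ps.map Prod.fst) :
    (ps.foldl (fun c' p => Function.update c' p.1 p.2) c) x = c x := by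
  induction ps generalizing c with
  | nil => rfl
  | cons p ps ih =>
    simp only [List.map_cons, List.mem_cons, not_or] at hx
    simp only [List.foldl_cons]
    rw [ih _ hx.2, Function.update_of_ne hx.1]

private lemma foldl_update_mem {α β : Type*} [DecidableEq α]
    (ps : List (α × β)) (c : α → β) {k : α} {v : β}
    (hnd : (ps.map Prod.fst).Nodup) (hmem : (k, v) ∈ ps) :
    (ps.foldl (fun c' p => Function.update c' p.1 p.2) c) k = v := by
  induction ps generalizing c with
  | nil => simp at hmem
  | cons p ps ih =>
    simp only [List.map_cons, List.nodup_cons] at hnd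
    simp only [List.foldl_cons]
    rcases List.mem_cons.1 hmem with h | h
    · rw [← h]
      rw [foldl_update_not_mem _ _ _ (by rw [← h] at hnd; exact hnd.1)]
      simp
    · exact ih _ hnd.2 h

private lemma getElem_mem_take' {α : Type*} (l : List α) (i : ℕ) (h : i < l.length) :
    l[i] ∈ l.take (i + 1) := by
  have h2 : i < (l.take (i+1)).length := by simp [List.length_take]; omega
  have h3 : (l.take (i+1))[i] = l[i] := List.getElem_take
  rw [← h3]
  exact List.getElem_mem _

private lemma mem_take_of_pairwise {α : Type*} {r : α → α → Prop}
    (htr : Transitive r) (hirr : ∀ a, ¬ r a a) {L : List α} (hL : L.Pairwise r)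
    (i : Fin L.length) {x : α} (hx : x ∈ L)
    (hlt : r x (L.get i) ∨ x = L.get i) :
    x ∈ L.take ((i : ℕ) + 1) := by
  obtain ⟨j, rfl⟩ := List.mem_iff_get.1 hx
  rcases Nat.lt_or_ge (j : ℕ) ((i : ℕ) + 1) with h | h
  · have : L.get j = L[(j : ℕ)] := rfl
    rw [this]
    have h2 : (j : ℕ) < (L.take ((i:ℕ)+1)).length := by simp [List.length_take]; omega
    have h3 : (L.take ((i:ℕ)+1))[(j : ℕ)] = L[(j : ℕ)] := List.getElem_take
    rw [← h3]; exact List.getElem_mem _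
  · exfalso
    have hij : i < j := by omega
    have hr : r (L.get i) (L.get j) := List.pairwise_iff_get.1 hL i j hij
    rcases hlt with hlt | heq
    · exact hirr _ (htr hr hlt)
    · rw [heq] at hr; exact hirr _ hr

private lemma exists_indep_set {V : Type*} [Fintype V] [DecidableEq V] (Γ : SimpleGraph V)
    [DecidableRel Γ.Adj] (D : ℕ) :
    ∀ (s : ℕ) (A : Finset V), (∀ w ∈ A, Γ.degree w ≤ D) → s * (D+1) ≤ A.card →
    ∃ S : Finset V, S ⊆ A ∧ S.card = s ∧ ∀ x ∈ S, ∀ y ∈ S, ¬ Γ.Adj x y := by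
  intro s
  induction s with
  | zero => exact fun A _ _ => ⟨∅, by simp⟩
  | succ s ih =>
    intro A hdeg hcard
    have hA : A.Nonempty := Finset.card_pos.1 (by nlinarith)
    obtain ⟨w, hw⟩ := hA
    set A' := A \ insert w (Γ.neighborFinset w) with hA'
    have hsub : A' ⊆ A := Finset.sdiff_subset
    have hcard' : s * (D+1) ≤ A'.card := by
      have h1 : (insert w (Γ.neighborFinset w)).card ≤ D + 1 := by
        have := Finset.card_insert_le w (Γ.neighborFinset w)
        have h2 := hdeg w hw
        rw [SimpleGraph.degree] at h2
        omega
      have h2 : A.card ≤ A'.card + (D+1) := by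
        have h3 := Finset.le_card_sdiff (insert w (Γ.neighborFinset w)) A
        rw [← hA'] at h3
        omega
      nlinarith
    obtain ⟨S, hS, hScard, hindep⟩ := ih A' (fun x hx => hdeg x (hsub hx)) hcard'
    have hwS : w ∉ S := by
      intro h
      have := hS h
      rw [hA', Finset.mem_sdiff] at this
      exact this.2 (Finset.mem_insert_self _ _)
    refine ⟨insert w S, ?_, ?_, ?_⟩
    · intro x hx
      rcases Finset.mem_insert.1 hx with rfl | hx
      · exact hw
      · exact hsub (hS hx)
    · rw [Finset.card_insert_of_notMem hwS, hScard]
    · intro x hx y hy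
      rcases Finset.mem_insert.1 hx with hx' | hx' <;>
        rcases Finset.mem_insert.1 hy with hy' | hy'
      · subst hx'; subst hy'; exact Γ.loopless.irrefl _
      · subst hx'
        intro had
        have h5 := hS hy'
        rw [hA', Finset.mem_sdiff] at h5
        exact h5.2 (Finset.mem_insert_of_mem (by rwa [SimpleGraph.mem_neighborFinset]))
      · subst hy'
        intro had
        have h5 := hS hx'
        rw [hA', Finset.mem_sdiff] at h5
        exact h5.2 (Finset.mem_insert_of_mem
          (by rw [SimpleGraph.mem_neighborFinset]; exact had.symm))
      · exact hindep x hx' y hy'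


private lemma card_add_card_compl {V : Type*} [Fintype V] [DecidableEq V] (G : SimpleGraph V)
    [DecidableRel G.Adj] [DecidableRel Gᶜ.Adj] :
    G.edgeFinset.card + Gᶜ.edgeFinset.card = (Fintype.card V).choose 2 := by
  classical
  rw [← SimpleGraph.card_edgeFinset_top_eq_card_choose_two]
  rw [← Finset.card_union_of_disjoint (by
    rw [Finset.disjoint_left]
    intro q hq hq'
    rw [SimpleGraph.mem_edgeFinset] at hq hq'
    have : q ∈ (G ⊓ Gᶜ).edgeSet := by rw [SimpleGraph.edgeSet_inf]; exact ⟨hq, hq'⟩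
    rw [inf_compl_eq_bot, SimpleGraph.edgeSet_bot] at this
    exact this)]
  congr 1
  apply Finset.coe_injective
  rw [Finset.coe_union, SimpleGraph.coe_edgeFinset, SimpleGraph.coe_edgeFinset,
    SimpleGraph.coe_edgeFinset, ← SimpleGraph.edgeSet_sup, sup_compl_eq_top]

private lemma exists_clique_of_dense {V : Type*} [Fintype V] [DecidableEq V]
    (G : SimpleGraph V) [DecidableRel Gᶜ.Adj] (r : ℕ)
    (hN : 17 * r + 1 ≤ Fintype.card V)
    (hq : Gᶜ.edgeFinset.card ≤ 2 * Fintype.card V + 1) :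
    ∃ S : Finset V, S.card = r ∧ ∀ x ∈ S, ∀ y ∈ S, x ≠ y → G.Adj x y := by
  classical
  set N := Fintype.card V with hNdef
  set q := Gᶜ.edgeFinset.card with hqdef
  have hsum : ∑ w, Gᶜ.degree w = 2 * q := SimpleGraph.sum_degrees_eq_twice_card_edges _
  set A := Finset.univ.filter (fun w => Gᶜ.degree w ≤ 9) with hAdef
  set B := Finset.univ.filter (fun w : V => ¬ (Gᶜ.degree w ≤ 9)) with hBdef
  have hB10 : B.card * 10 ≤ 2 * q := by
    calc B.card * 10 = B.card • 10 := by simp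
    _ ≤ ∑ w ∈ B, Gᶜ.degree w := Finset.card_nsmul_le_sum B _ 10 (fun x hx => by
        rw [hBdef, Finset.mem_filter] at hx; omega)
    _ ≤ ∑ w, Gᶜ.degree w :=
        Finset.sum_le_sum_of_subset (Finset.filter_subset _ _)
    _ = 2 * q := hsum
  have hAB : A.card + B.card = N := by
    rw [hAdef, hBdef]
    rw [Finset.card_filter_add_card_filter_not]
    exact Finset.card_univ
  have hAcard : r * (9 + 1) ≤ A.card := by omega
  obtain ⟨S, _, hcard, hindep⟩ := exists_indep_set Gᶜ 9 r A
    (fun w hw => by rw [hAdef, Finset.mem_filter] at hw; exact hw.2) hAcard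
  refine ⟨S, hcard, fun x hx y hy hxy => ?_⟩
  have h := hindep x hx y hy
  rw [SimpleGraph.compl_adj] at h
  push_neg at h
  exact h hxy


section ExFamFacts

variable {W : Type*} [Fintype W] (H : SimpleGraph W)

private lemma card_compl_pair [DecidableEq W] {a b : W} (hab : a ≠ b) :
    Fintype.card ↥(({a, b}ᶜ : Set W)) = Fintype.card W - 2 := by
  classical
  rw [Fintype.card_compl_set]
  congr 1
  rw [Set.card_insert _ (by simp [hab]), Set.card_singleton]

private lemma exFam_ub (N : ℕ) :
    ∀ m ∈ {m | ∃ G' : SimpleGraph (Fin N),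
      (∀ u' v' : W, H.Adj u' v' → ¬ ContainsCopy (H.induce ({u', v'}ᶜ : Set W)) G') ∧
      G'.edgeSet.ncard = m}, m ≤ N.choose 2 := by
  classical
  rintro m ⟨G', _, rfl⟩
  letI : DecidableRel G'.Adj := Classical.decRel _
  rw [Set.ncard_eq_toFinset_card' _]
  have h := SimpleGraph.card_edgeFinset_le_card_choose_two (G := G')
  rw [Fintype.card_fin] at h
  exact h

private lemma contains_of_dense_of_cond {N : ℕ}
    (hcond : (exFam H N : ℤ) ≤ (N.choose 2 : ℤ) - 2 * N - 2)
    (G' : SimpleGraph (Fin N))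
    (hdense : ((N.choose 2 : ℤ) - 2 * N - 2) < (G'.edgeSet.ncard : ℤ)) :
    ∃ a b, H.Adj a b ∧ ContainsCopy (H.induce ({a, b}ᶜ : Set W)) G' := by
  by_contra hcon
  push_neg at hcon
  have hmem : G'.edgeSet.ncard ∈ {m | ∃ G'' : SimpleGraph (Fin N),
      (∀ u' v' : W, H.Adj u' v' → ¬ ContainsCopy (H.induce ({u', v'}ᶜ : Set W)) G'') ∧
      G''.edgeSet.ncard = m} := ⟨G', hcon, rfl⟩
  have hle : G'.edgeSet.ncard ≤ exFam H N :=
    le_csSup ⟨N.choose 2, exFam_ub H N⟩ hmem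
  have : (G'.edgeSet.ncard : ℤ) ≤ (exFam H N : ℤ) := Int.ofNat_le.2 hle
  linarith

private lemma exFam_eq_of_small [DecidableEq W]
    (hpend : ∃ u v, H.Adj u v ∧ (H.neighborSet v).ncard = 1)
    (N : ℕ) (hN : N < Fintype.card W - 2) : exFam H N = N.choose 2 := by
  classical
  apply le_antisymm (csSup_le' (exFam_ub H N))
  apply le_csSup ⟨N.choose 2, exFam_ub H N⟩
  refine ⟨⊤, ?_, ?_⟩
  · intro u' v' hadj ⟨f, hinj, _⟩
    have h1 : Fintype.card ↥(({u', v'}ᶜ : Set W)) ≤ Fintype.card (Fin N) :=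
      Fintype.card_le_of_injective f hinj
    rw [card_compl_pair hadj.ne, Fintype.card_fin] at h1
    omega
  · rw [Set.ncard_eq_toFinset_card' _]
    have : (⊤ : SimpleGraph (Fin N)).edgeSet.toFinset =
        (⊤ : SimpleGraph (Fin N)).edgeFinset := rfl
    rw [this, SimpleGraph.card_edgeFinset_top_eq_card_choose_two, Fintype.card_fin]

private lemma fH_set_nonempty
    (hpend : ∃ u v, H.Adj u v ∧ (H.neighborSet v).ncard = 1) :
    {n | ∀ N ∈ ({n - 1, n} : Set ℕ),
      (exFam H N : ℤ) ≤ (N.choose 2 : ℤ) - 2 * N - 2}.Nonempty := by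
  classical
  obtain ⟨u, v, hadj, _⟩ := hpend
  set r := Fintype.card W with hrdef
  have key : ∀ N : ℕ, 17 * r + 30 ≤ N →
      (exFam H N : ℤ) ≤ (N.choose 2 : ℤ) - 2 * N - 2 := by
    intro N hNr
    have hch : 2 * N + 2 ≤ N.choose 2 := by
      obtain ⟨M, rfl⟩ : ∃ M, N = M + 1 := ⟨N - 1, by omega⟩
      rw [Nat.choose_two_right, Nat.le_div_iff_mul_le (by norm_num), Nat.add_sub_cancel]
      nlinarith
    have hub : ∀ m ∈ {m | ∃ G' : SimpleGraph (Fin N),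
        (∀ u' v' : W, H.Adj u' v' → ¬ ContainsCopy (H.induce ({u', v'}ᶜ : Set W)) G') ∧
        G'.edgeSet.ncard = m}, m ≤ N.choose 2 - (2 * N + 2) := by
      rintro m ⟨G', havoid, rfl⟩
      by_contra hgt
      push_neg at hgt
      letI : DecidableRel G'.Adj := Classical.decRel _
      letI : DecidableRel G'ᶜ.Adj := Classical.decRel _
      have hcards := card_add_card_compl G'
      have hncard : G'.edgeSet.ncard = G'.edgeFinset.card := Set.ncard_eq_toFinset_card' _
      rw [Fintype.card_fin] at hcards
      have hle := exFam_ub H N (G'.edgeSet.ncard) ⟨G', havoid, rfl⟩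
      have hq : G'ᶜ.edgeFinset.card ≤ 2 * Fintype.card (Fin N) + 1 := by
        rw [Fintype.card_fin]; omega
      obtain ⟨S, hScard, hSadj⟩ := exists_clique_of_dense G' r
        (by rw [Fintype.card_fin]; omega) hq
      have hcard2 : Fintype.card ↥(({u, v}ᶜ : Set W)) ≤ Fintype.card ↥S := by
        rw [card_compl_pair hadj.ne, Fintype.card_coe, hScard]; omega
      obtain ⟨emb⟩ := Function.Embedding.nonempty_of_card_le hcard2
      refine havoid u v hadj ⟨fun x => ↑(emb x),
        fun x y hxy => emb.injective (Subtype.coe_injective hxy), ?_⟩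
      intro x y hxy
      have hne : x ≠ y := by
        rintro rfl
        rw [SimpleGraph.induce_eq_coe_induce_top] at hxy
        exact (SimpleGraph.irrefl _ hxy)
      exact hSadj _ (emb x).2 _ (emb y).2
        (fun h => hne (emb.injective (Subtype.coe_injective h)))
    have h2 : exFam H N ≤ N.choose 2 - (2 * N + 2) := csSup_le' hub
    have h3 : (exFam H N : ℤ) ≤ ((N.choose 2 - (2 * N + 2) : ℕ) : ℤ) := Int.ofNat_le.2 h2
    rw [Nat.cast_sub hch] at h3
    push_cast at h3 ⊢
    linarith
  refine ⟨17 * r + 31, ?_⟩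
  intro N hN
  rcases hN with h | h <;> (rw [h]; exact key _ (by omega))

end ExFamFacts

section Colors
variable {V : Type*} [DecidableEq V]

private lemma keys_take (L : List (Sym2 V)) (cs : List ℕ) (k : ℕ)
    (hlen : cs.length = L.length) :
    (((L.zip cs).take k).map Prod.fst) = L.take k := by
  rw [List.map_take, List.map_fst_zip (le_of_eq hlen.symm)]

private lemma vals_take (L : List (Sym2 V)) (cs : List ℕ) (k : ℕ)
    (hlen : cs.length = L.length) :
    (((L.zip cs).take k).map Prod.snd) = cs.take k := by
  rw [List.map_take, List.map_snd_zip (le_of_eq hlen)]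

private lemma col_not_mem (L : List (Sym2 V)) (cs : List ℕ) (c : Sym2 V → ℕ) (k : ℕ)
    (hlen : cs.length = L.length) (x : Sym2 V) (hx : x ∉ L.take k) :
    (((L.zip cs).take k).foldl (fun c' p => Function.update c' p.1 p.2) c) x = c x := by
  apply foldl_update_not_mem
  rw [keys_take L cs k hlen]
  exact hx

private lemma col_mem_pair (L : List (Sym2 V)) (cs : List ℕ) (c : Sym2 V → ℕ) (k : ℕ)
    (hlen : cs.length = L.length) (hnd : L.Nodup) {x : Sym2 V}
    (hx : x ∈ L.take k) :
    ∃ y, (x, y) ∈ (L.zip cs).take k ∧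
      (((L.zip cs).take k).foldl (fun c' p => Function.update c' p.1 p.2) c) x = y := by
  have hxm : x ∈ ((L.zip cs).take k).map Prod.fst := by
    rw [keys_take L cs k hlen]; exact hx
  obtain ⟨pr, hpr, hpr1⟩ := List.mem_map.1 hxm
  have hxpr : (x, pr.2) ∈ (L.zip cs).take k := by rw [← hpr1]; exact hpr
  refine ⟨pr.2, hxpr, ?_⟩
  apply foldl_update_mem _ _ ?_ hxpr
  rw [keys_take L cs k hlen]
  exact hnd.sublist (List.take_sublist _ _)

private lemma col_inj_take (L : List (Sym2 V)) (cs : List ℕ) (c : Sym2 V → ℕ) (k : ℕ)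
    (hlen : cs.length = L.length) (hnd : L.Nodup) (hcs : cs.Nodup) :
    ∀ x ∈ L.take k, ∀ y ∈ L.take k,
      (((L.zip cs).take k).foldl (fun c' p => Function.update c' p.1 p.2) c) x =
      (((L.zip cs).take k).foldl (fun c' p => Function.update c' p.1 p.2) c) y → x = y := by
  intro x hx y hy hcol
  obtain ⟨vx, hvx, hvx2⟩ := col_mem_pair L cs c k hlen hnd hx
  obtain ⟨vy, hvy, hvy2⟩ := col_mem_pair L cs c k hlen hnd hy
  have hvnd : (((L.zip cs).take k).map Prod.snd).Nodup := by
    rw [vals_take L cs k hlen]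
    exact hcs.sublist (List.take_sublist _ _)
  have heq : (x, vx) = (y, vy) := by
    apply List.inj_on_of_nodup_map hvnd hvx hvy
    simp only
    rw [← hvx2, ← hvy2, hcol]
  exact congrArg Prod.fst heq

private lemma col_getElem (L : List (Sym2 V)) (cs : List ℕ) (c : Sym2 V → ℕ) (k : ℕ)
    (hlen : cs.length = L.length) (hnd : L.Nodup) (i : ℕ) (hik : i < k) (hi : i < L.length) :
    (((L.zip cs).take k).foldl (fun c' p => Function.update c' p.1 p.2) c) L[i] =
      cs[i]'(by omega) := by
  have hz : i < (L.zip cs).length := by rw [List.length_zip]; omega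
  have hmem : (L[i], cs[i]'(by omega)) ∈ (L.zip cs).take k := by
    have h1 : (L.zip cs)[i] = (L[i], cs[i]'(by omega)) := List.getElem_zip
    have h2 : i < ((L.zip cs).take k).length := by
      rw [List.length_take]; omega
    have h3 : ((L.zip cs).take k)[i] = (L.zip cs)[i] := List.getElem_take
    rw [← h1, ← h3]
    exact List.getElem_mem _
  apply foldl_update_mem _ _ ?_ hmem
  rw [keys_take L cs k hlen]
  exact hnd.sublist (List.take_sublist _ _)

end Colors


namespace RwsatAux

noncomputable def keyM {n : ℕ} : Sym2 (Fin n) → ℕ :=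
  Sym2.lift ⟨fun a b => max (a : ℕ) (b : ℕ), fun a b => max_comm _ _⟩

noncomputable def keyT {n : ℕ} : Sym2 (Fin n) → ℕ :=
  Sym2.lift ⟨fun a b => min (a : ℕ) (b : ℕ), fun a b => min_comm _ _⟩

@[simp] lemma keyM_mk {n : ℕ} (a b : Fin n) : keyM s(a, b) = max (a : ℕ) (b : ℕ) := rfl

@[simp] lemma keyT_mk {n : ℕ} (a b : Fin n) : keyT s(a, b) = min (a : ℕ) (b : ℕ) := rfl

def relL {n : ℕ} (x y : Sym2 (Fin n)) : Prop :=
  keyM x < keyM y ∨ (keyM x = keyM y ∧ keyT x < keyT y)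

lemma relL_iff {n : ℕ} (x y : Sym2 (Fin n)) :
    relL x y ↔ keyM x < keyM y ∨ (keyM x = keyM y ∧ keyT x < keyT y) := Iff.rfl

lemma relL_trans {n : ℕ} : Transitive (relL (n := n)) := by
  intro x y z h1 h2
  rcases h1 with h1 | ⟨h1, h1'⟩ <;> rcases h2 with h2 | ⟨h2, h2'⟩ <;>
    unfold relL <;> omega

lemma relL_irrefl {n : ℕ} : ∀ x : Sym2 (Fin n), ¬ relL x x := by
  intro x h
  rcases h with h | ⟨_, h⟩ <;> omega

noncomputable def cliqueL (n p : ℕ) : List (Sym2 (Fin n)) :=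
  ((List.finRange n).filter (fun m : Fin n => decide (p ≤ (m : ℕ)))).flatMap
    (fun m : Fin n => (((List.finRange n).filter (fun t : Fin n => decide ((t : ℕ) < (m : ℕ)))).map
      (fun t : Fin n => s(m, t))))

lemma mem_cliqueL {n p : ℕ} (x : Sym2 (Fin n)) :
    x ∈ cliqueL n p ↔ ∃ a b : Fin n, x = s(a, b) ∧ (b : ℕ) < (a : ℕ) ∧ p ≤ (a : ℕ) := by
  unfold cliqueL
  simp only [List.mem_flatMap, List.mem_map, List.mem_filter, List.mem_finRange,
    decide_eq_true_eq, true_and]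
  constructor
  · rintro ⟨m, hm, t, ht, rfl⟩
    exact ⟨m, t, rfl, ht, hm⟩
  · rintro ⟨a, b, rfl, hba, hpa⟩
    exact ⟨a, hpa, b, hba, rfl⟩

lemma cliqueL_pairwise (n p : ℕ) : (cliqueL n p).Pairwise relL := by
  unfold cliqueL
  rw [List.pairwise_flatMap]
  constructor
  · intro m hm
    rw [List.pairwise_map]
    have hpw : (((List.finRange n).filter
        (fun t : Fin n => decide ((t : ℕ) < (m : ℕ))))).Pairwise (· < ·) :=
      (List.pairwise_lt_finRange n).sublist List.filter_sublist
    apply List.Pairwise.imp_of_mem ?_ hpw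
    intro a b ha hb hab
    rw [List.mem_filter, decide_eq_true_eq] at ha hb
    have h1 : (a : ℕ) < (m : ℕ) := ha.2
    have h2 : (b : ℕ) < (m : ℕ) := hb.2
    have h3 : (a : ℕ) < (b : ℕ) := hab
    right
    simp only [keyM_mk, keyT_mk]
    omega
  · have hpw : (((List.finRange n).filter
        (fun m : Fin n => decide (p ≤ (m : ℕ))))).Pairwise (· < ·) :=
      (List.pairwise_lt_finRange n).sublist List.filter_sublist
    apply List.Pairwise.imp_of_mem ?_ hpw
    intro a b _ _ hab
    intro x hx y hy
    simp only [List.mem_map, List.mem_filter, decide_eq_true_eq] at hx hy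
    obtain ⟨ta, hta, rfl⟩ := hx
    obtain ⟨tb, htb, rfl⟩ := hy
    have h1 : (ta : ℕ) < (a : ℕ) := hta.2
    have h2 : (tb : ℕ) < (b : ℕ) := htb.2
    have h3 : (a : ℕ) < (b : ℕ) := hab
    left
    simp only [keyM_mk]
    omega

lemma cliqueL_nodup (n p : ℕ) : (cliqueL n p).Nodup := by
  apply List.Pairwise.imp ?_ (cliqueL_pairwise n p)
  intro x y hr
  rintro rfl
  exact relL_irrefl _ hr

end RwsatAux

private lemma weakly_sat_clique {W : Type*} [Fintype W] (H : SimpleGraph W)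
    {u v : W} (hadj : H.Adj u v) (hNv : H.neighborSet v = {u})
    (n p F : ℕ) (hpF : p = F + 1)
    (hcondF : (exFam H F : ℤ) ≤ (F.choose 2 : ℤ) - 2 * F - 2)
    (hrp : Fintype.card W ≤ p) (hr2 : 2 ≤ Fintype.card W)
    (hpn : p < n)
    (c : Sym2 (Fin n) → ℕ)
    (hc : RainbowOn c (SimpleGraph.fromRel
      (fun i j : Fin n => (i : ℕ) < p ∧ (j : ℕ) < p)).edgeSet) :
    WeaklyRainbowSat H
      (SimpleGraph.fromRel (fun i j : Fin n => (i : ℕ) < p ∧ (j : ℕ) < p)) c := by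
  classical
  set G := SimpleGraph.fromRel (fun i j : Fin n => (i : ℕ) < p ∧ (j : ℕ) < p) with hGdef
  have hGadj : ∀ a b : Fin n, G.Adj a b ↔ a ≠ b ∧ ((a : ℕ) < p ∧ (b : ℕ) < p) := by
    intro a b
    rw [hGdef, SimpleGraph.fromRel_adj]
    constructor
    · rintro ⟨h1, h2 | h2⟩
      · exact ⟨h1, h2⟩
      · exact ⟨h1, h2.2, h2.1⟩
    · rintro ⟨h1, h2⟩
      exact ⟨h1, Or.inl h2⟩
  set L := RwsatAux.cliqueL n p with hLdef
  have hLpw : L.Pairwise RwsatAux.relL := RwsatAux.cliqueL_pairwise n p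
  have hLnd : L.Nodup := RwsatAux.cliqueL_nodup n p
  have hmemL : ∀ x : Sym2 (Fin n),
      x ∈ L ↔ ∃ a b : Fin n, x = s(a, b) ∧ (b : ℕ) < (a : ℕ) ∧ p ≤ (a : ℕ) :=
    fun x => RwsatAux.mem_cliqueL x
  have hLcompl : ∀ x, x ∈ L ↔ x ∈ Gᶜ.edgeSet := by
    intro x
    induction x with
    | _ a b =>
      rw [hmemL, SimpleGraph.mem_edgeSet, SimpleGraph.compl_adj, hGadj]
      constructor
      · rintro ⟨a', b', heq, hba, hpa⟩
        rw [Sym2.eq_iff] at heq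
        have hne : a ≠ b := by
          rcases heq with ⟨rfl, rfl⟩ | ⟨rfl, rfl⟩ <;>
            (intro hcon; rw [hcon] at hba; omega)
        refine ⟨hne, ?_⟩
        rcases heq with ⟨rfl, rfl⟩ | ⟨rfl, rfl⟩ <;> (rintro ⟨h1, h2⟩; omega)
      · rintro ⟨hne, hnadj⟩
        have hvne : (a : ℕ) ≠ (b : ℕ) := fun h => hne (Fin.ext h)
        have hnb : ¬ ((a : ℕ) < p ∧ (b : ℕ) < p) := fun hb => hnadj ⟨hne, hb⟩
        rcases Nat.lt_or_ge (a : ℕ) (b : ℕ) with h | h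
        · exact ⟨b, a, Sym2.eq_swap.symm, h, by omega⟩
        · exact ⟨a, b, rfl, by omega, by omega⟩
  refine ⟨L, hLnd, hLcompl, ?_⟩
  intro cs hlen hnodup i
  have hiL : (i : ℕ) < L.length := i.2
  have hics : (i : ℕ) < cs.length := by omega
  obtain ⟨mF, tF, heq, htm, hpm⟩ := (hmemL _).1 (List.get_mem L i)
  have hget : L.get i = L[(i : ℕ)] := rfl
  set k := (i : ℕ) + 1 with hkdef
  set ci := (((L.zip cs).take k).foldl (fun c' p => Function.update c' p.1 p.2) c)
    with hcidef
  set csi := cs[(i : ℕ)]'hics with hcsidef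
  have hci_e : ci (L.get i) = csi := by
    rw [hcidef, hget]
    exact col_getElem L cs c k hlen hLnd (i : ℕ) (by omega) hiL
  have hci_inj := col_inj_take L cs c k hlen hLnd hnodup
  have hci_not : ∀ x, x ∉ L → ci x = c x := fun x hx =>
    col_not_mem L cs c k hlen x (fun h => hx (List.take_subset _ _ h))
  have he_take : L.get i ∈ L.take k := by
    rw [hget]; exact getElem_mem_take' L (i : ℕ) hiL
  have htake : ∀ x, x ∈ L → RwsatAux.relL x (L.get i) → x ∈ L.take k :=
    fun x hx hr => mem_take_of_pairwise RwsatAux.relL_trans RwsatAux.relL_irrefl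
      hLpw i hx (Or.inl hr)
  have hAdj_cl : ∀ a b : Fin n, a ≠ b → (a : ℕ) < p → (b : ℕ) < p →
      (G ⊔ SimpleGraph.fromEdgeSet {e | e ∈ L.take k}).Adj a b :=
    fun a b hne ha hb => Or.inl ((hGadj a b).2 ⟨hne, ha, hb⟩)
  have hAdj_tk : ∀ a b : Fin n, a ≠ b → s(a, b) ∈ L.take k →
      (G ⊔ SimpleGraph.fromEdgeSet {e | e ∈ L.take k}).Adj a b :=
    fun a b hne hmem => Or.inr ((SimpleGraph.fromEdgeSet_adj _).2 ⟨hmem, hne⟩)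
  have hclnL : ∀ a b : Fin n, (a : ℕ) < p → (b : ℕ) < p → s(a, b) ∉ L := by
    intro a b ha hb hmem
    obtain ⟨a', b', heq', h1, h2⟩ := (hmemL _).1 hmem
    rw [Sym2.eq_iff] at heq'
    rcases heq' with ⟨rfl, rfl⟩ | ⟨rfl, rfl⟩ <;> omega
  have hGedge : ∀ a b : Fin n, a ≠ b → (a : ℕ) < p → (b : ℕ) < p →
      s(a, b) ∈ G.edgeSet :=
    fun a b hne ha hb => (SimpleGraph.mem_edgeSet G).2 ((hGadj a b).2 ⟨hne, ha, hb⟩)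

  by_cases hcase : (tF : ℕ) < p
  · -- CASE 1 : the new edge goes into the original clique
    have huv : u ≠ v := hadj.ne
    have hp2 : 2 ≤ p := le_trans hr2 hrp
    obtain ⟨z, hzp, hzt, hzprop⟩ : ∃ z : Fin n, (z : ℕ) < p ∧ z ≠ tF ∧
        ∀ q ∈ G.edgeSet, c q = csi → z ∈ q := by
      by_cases hex : ∃ q ∈ G.edgeSet, c q = csi
      · obtain ⟨q0, hq0, hcq0⟩ := hex
        revert hq0 hcq0
        induction q0 with
        | _ z1 z2 =>
          intro hq0 hcq0
          have hz12 := (hGadj z1 z2).1 ((SimpleGraph.mem_edgeSet G).1 hq0)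
          refine ⟨if z1 = tF then z2 else z1, ?_, ?_, ?_⟩
          · split
            · exact hz12.2.2
            · exact hz12.2.1
          · split
            · rename_i h
              intro hcon
              exact hz12.1 (h.trans hcon.symm)
            · rename_i h
              exact h
          · intro q hq hcq
            have hqq := hc q hq s(z1, z2) hq0 (hcq.trans hcq0.symm)
            rw [hqq]
            split
            · exact Sym2.mem_mk_right _ _
            · exact Sym2.mem_mk_left _ _
      · push_neg at hex
        have h0n : 0 < n := by omega
        have h1n : 1 < n := by omega
        refine ⟨if tF = ⟨0, h0n⟩ then ⟨1, h1n⟩ else ⟨0, h0n⟩, ?_, ?_,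
          fun q hq hcq => absurd hcq (hex q hq)⟩
        · split <;> simp <;> omega
        · split
          · rename_i h
            intro hcon
            rw [h] at hcon
            exact absurd (congrArg Fin.val hcon) (by simp)
          · rename_i h
            intro hcon
            exact h hcon.symm
    -- the target finset
    have hcliq_card : (Finset.univ.filter (fun x : Fin n => (x : ℕ) < p)).card = p := by
      have himg : (Finset.univ.filter (fun x : Fin n => (x : ℕ) < p)) =
          Finset.map (Fin.castLEEmb hpn.le) Finset.univ := by
        ext x
        simp only [Finset.mem_filter, Finset.mem_univ, true_and, Finset.mem_map]
        constructor
        · intro hx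
          exact ⟨⟨(x : ℕ), hx⟩, by ext; simp⟩
        · rintro ⟨y, _, rfl⟩
          simpa using y.2
      rw [himg, Finset.card_map, Finset.card_univ, Fintype.card_fin]
    set T : Finset (Fin n) :=
      ((Finset.univ.filter (fun x : Fin n => (x : ℕ) < p)).erase tF).erase z with hTdef
    have htFmem : tF ∈ Finset.univ.filter (fun x : Fin n => (x : ℕ) < p) := by
      simp [hcase]
    have hzmem : z ∈ (Finset.univ.filter (fun x : Fin n => (x : ℕ) < p)).erase tF := by
      rw [Finset.mem_erase]
      exact ⟨hzt, Finset.mem_filter.2 ⟨Finset.mem_univ _, hzp⟩⟩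
    have hTcard : T.card = p - 2 := by
      rw [hTdef, Finset.card_erase_of_mem hzmem, Finset.card_erase_of_mem htFmem,
        hcliq_card]
      omega
    have hcard2 : Fintype.card ↥(({u, v}ᶜ : Set W)) ≤ Fintype.card ↥T := by
      rw [card_compl_pair hadj.ne, Fintype.card_coe, hTcard]
      omega
    obtain ⟨emb⟩ := Function.Embedding.nonempty_of_card_le hcard2
    have hmemuv : ∀ x : W, x ≠ u → x ≠ v → x ∈ ({u, v}ᶜ : Set W) := by
      intro x hxu hxv
      simp [hxu, hxv]
    set φ : W → Fin n := fun x =>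
      if hxv : x = v then mF else if hxu : x = u then tF
      else (emb ⟨x, hmemuv x hxu hxv⟩ : Fin n) with hφdef
    have hφv : φ v = mF := by rw [hφdef]; simp
    have hφu : φ u = tF := by
      rw [hφdef]; dsimp only; rw [dif_neg huv, dif_pos rfl]
    have hφoth : ∀ x (hxu : x ≠ u) (hxv : x ≠ v),
        φ x = (emb ⟨x, hmemuv x hxu hxv⟩ : Fin n) := by
      intro x hxu hxv
      rw [hφdef]; dsimp only; rw [dif_neg hxv, dif_neg hxu]
    have hTprop : ∀ w ∈ T, (w : ℕ) < p ∧ w ≠ tF ∧ w ≠ z := by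
      intro w hw
      rw [hTdef, Finset.mem_erase, Finset.mem_erase, Finset.mem_filter] at hw
      exact ⟨hw.2.2.2, hw.2.1, hw.1⟩
    have hφcases : ∀ x : W, (x = v ∧ φ x = mF) ∨ (x = u ∧ φ x = tF) ∨
        (x ≠ u ∧ x ≠ v ∧ φ x ∈ T) := by
      intro x
      by_cases hxv : x = v
      · exact Or.inl ⟨hxv, by rw [hxv, hφv]⟩
      · by_cases hxu : x = u
        · exact Or.inr (Or.inl ⟨hxu, by rw [hxu, hφu]⟩)
        · refine Or.inr (Or.inr ⟨hxu, hxv, ?_⟩)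
          rw [hφoth x hxu hxv]
          exact (emb ⟨x, hmemuv x hxu hxv⟩).2
    have hφinj : Function.Injective φ := by
      intro x y hxy
      rcases hφcases x with ⟨hx1, hx2⟩ | ⟨hx1, hx2⟩ | ⟨hx1, hx1', hx2⟩ <;>
        rcases hφcases y with ⟨hy1, hy2⟩ | ⟨hy1, hy2⟩ | ⟨hy1, hy1', hy2⟩
      · rw [hx1, hy1]
      · exfalso; rw [hx2, hy2] at hxy
        have := congrArg Fin.val hxy
        omega
      · exfalso; rw [hx2] at hxy
        have := (hTprop _ (hxy ▸ hy2)).1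
        have h2 := congrArg Fin.val hxy
        omega
      · exfalso; rw [hx2, hy2] at hxy
        have := congrArg Fin.val hxy
        omega
      · rw [hx1, hy1]
      · exfalso
        exact (hTprop _ hy2).2.1 (by rw [← hxy, hx2])
      · exfalso; rw [hy2] at hxy
        have := (hTprop _ (hxy ▸ hx2)).1
        have h2 := congrArg Fin.val hxy
        omega
      · exfalso
        exact (hTprop _ hx2).2.1 (by rw [hxy, hy2])
      · rw [hφoth x hx1 hx1', hφoth y hy1 hy1'] at hxy
        have := emb.injective (Subtype.coe_injective hxy)
        exact congrArg Subtype.val this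
    have hvadj : ∀ y, H.Adj v y → y = u := by
      intro y hy
      have hyn : y ∈ H.neighborSet v := hy
      rw [hNv] at hyn
      exact hyn
    have hφlt : ∀ x : W, x ≠ v → (φ x : ℕ) < p ∧ φ x ≠ z := by
      intro x hxv
      rcases hφcases x with ⟨hx1, _⟩ | ⟨_, hx2⟩ | ⟨_, _, hx2⟩
      · exact absurd hx1 hxv
      · rw [hx2]
        exact ⟨hcase, fun h => hzt h.symm⟩
      · exact ⟨(hTprop _ hx2).1, (hTprop _ hx2).2.2⟩
    have hemtF : s(tF, mF) = L.get i := by rw [heq]; exact Sym2.eq_swap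
    have hφadj : ∀ ⦃x y : W⦄, H.Adj x y →
        (G ⊔ SimpleGraph.fromEdgeSet {e | e ∈ L.take k}).Adj (φ x) (φ y) := by
      intro x y hxy
      have hmtne : mF ≠ tF := by
        intro hcon
        have := congrArg Fin.val hcon
        omega
      by_cases hxv : x = v
      · subst hxv
        rw [hvadj y hxy, hφv, hφu]
        apply hAdj_tk _ _ hmtne
        rw [← heq]
        exact he_take
      · by_cases hyv : y = v
        · subst hyv
          have hxu : x = u := hvadj x hxy.symm
          subst hxu
          rw [hφv, hφu]
          apply hAdj_tk _ _ (Ne.symm hmtne)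
          rw [hemtF]
          exact he_take
        · exact hAdj_cl _ _ (fun h => hxy.ne (hφinj h)) (hφlt x hxv).1 (hφlt y hyv).1
    have hcl_edge : ∀ x y, H.Adj x y → s(x, y) ≠ s(u, v) →
        s(φ x, φ y) ∈ G.edgeSet ∧ z ∉ (s(φ x, φ y) : Sym2 (Fin n)) ∧
          ci s(φ x, φ y) = c s(φ x, φ y) := by
      intro x y hxy hne
      have hxv : x ≠ v := by
        rintro rfl
        apply hne
        rw [hvadj y hxy]
        exact Sym2.eq_swap
      have hyv : y ≠ v := by
        rintro rfl
        apply hne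
        rw [hvadj x hxy.symm]
      obtain ⟨hpx, hzx⟩ := hφlt x hxv
      obtain ⟨hpy, hzy⟩ := hφlt y hyv
      have hfne : φ x ≠ φ y := fun h => hxy.ne (hφinj h)
      refine ⟨hGedge _ _ hfne hpx hpy, ?_, ?_⟩
      · rw [Sym2.mem_iff]
        rintro (h | h)
        · exact hzx h.symm
        · exact hzy h.symm
      · exact hci_not _ (hclnL _ _ hpx hpy)
    have hrain : ∀ ⦃x y x' y' : W⦄, H.Adj x y → H.Adj x' y' →
        ci s(φ x, φ y) = ci s(φ x', φ y') → s(x, y) = s(x', y') := by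
      have key : ∀ ⦃x y x' y' : W⦄, H.Adj x y → H.Adj x' y' →
          s(x, y) = s(u, v) → s(x', y') ≠ s(u, v) →
          ci s(φ x, φ y) ≠ ci s(φ x', φ y') := by
        intro x y x' y' h1 h2 e1 e2 hcol
        obtain ⟨hg2, hz2, hc2⟩ := hcl_edge x' y' h2 e2
        have himg1 : s(φ x, φ y) = s(φ u, φ v) := by
          rw [← Sym2.map_pair_eq, ← Sym2.map_pair_eq, e1]
        rw [himg1, hφu, hφv, hemtF, hci_e] at hcol
        rw [hc2] at hcol
        exact hz2 (hzprop _ hg2 hcol.symm)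
      intro x y x' y' h1 h2 hcol
      by_cases e1 : s(x, y) = s(u, v) <;> by_cases e2 : s(x', y') = s(u, v)
      · rw [e1, e2]
      · exact absurd hcol (key h1 h2 e1 e2)
      · exact absurd hcol.symm (key h2 h1 e2 e1)
      · obtain ⟨hg1, _, hc1⟩ := hcl_edge x y h1 e1
        obtain ⟨hg2, _, hc2⟩ := hcl_edge x' y' h2 e2
        rw [hc1, hc2] at hcol
        have himg := hc _ hg1 _ hg2 hcol
        rw [← Sym2.map_pair_eq, ← Sym2.map_pair_eq] at himg
        exact Sym2.map.injective hφinj himg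
    refine ⟨φ, hφinj, hφadj, hrain, u, v, hadj, ?_⟩
    rw [hφu, hφv, hemtF]
  · -- CASE 2 : edge between two vertices outside the clique
    push_neg at hcase
    have hp2 : 2 ≤ p := le_trans hr2 hrp
    have hF1 : 1 ≤ F := by omega
    have heq' : L.get i = s(mF, tF) := heq
    set cliqueT : Finset (Fin n) := Finset.univ.filter (fun x : Fin n => (x : ℕ) < p)
      with hcTdef
    have hcliq_card : cliqueT.card = p := by
      have himg : cliqueT = Finset.map (Fin.castLEEmb hpn.le) Finset.univ := by
        ext x
        simp only [hcTdef, Finset.mem_filter, Finset.mem_univ, true_and, Finset.mem_map]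
        constructor
        · intro hx
          exact ⟨⟨(x : ℕ), hx⟩, by ext; simp⟩
        · rintro ⟨y, _, rfl⟩
          simpa using y.2
      rw [himg, Finset.card_map, Finset.card_univ, Fintype.card_fin]
    have hmem_cT : ∀ x : Fin n, x ∈ cliqueT ↔ (x : ℕ) < p := by
      intro x
      simp [hcTdef]
    -- star edges lie in the prefix
    have hstar_t : ∀ zz : Fin n, (zz : ℕ) < p → s(tF, zz) ∈ L.take k := by
      intro zz hzz
      apply htake
      · rw [hmemL]
        exact ⟨tF, zz, rfl, by omega, hcase⟩
      · rw [heq', RwsatAux.relL_iff]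
        left
        simp only [RwsatAux.keyM_mk]
        rw [Nat.max_eq_left (by omega : (zz : ℕ) ≤ (tF : ℕ)),
          Nat.max_eq_left (by omega : (tF : ℕ) ≤ (mF : ℕ))]
        omega
    have hstar_m : ∀ zz : Fin n, (zz : ℕ) < p → s(mF, zz) ∈ L.take k := by
      intro zz hzz
      apply htake
      · rw [hmemL]
        exact ⟨mF, zz, rfl, by omega, hpm⟩
      · rw [heq', RwsatAux.relL_iff]
        right
        simp only [RwsatAux.keyM_mk, RwsatAux.keyT_mk]
        rw [Nat.max_eq_left (by omega : (zz : ℕ) ≤ (mF : ℕ)),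
          Nat.max_eq_left (by omega : (tF : ℕ) ≤ (mF : ℕ)),
          Nat.min_eq_right (by omega : (zz : ℕ) ≤ (mF : ℕ)),
          Nat.min_eq_right (by omega : (tF : ℕ) ≤ (mF : ℕ))]
        omega
    -- the bad colors
    set Cbad : Finset ℕ :=
      insert csi ((cliqueT.image (fun zz => ci s(tF, zz))) ∪
        (cliqueT.image (fun zz => ci s(mF, zz)))) with hCdef
    have hCcard : Cbad.card ≤ 2 * p + 1 := by
      have h1 := Finset.card_insert_le csi
        ((cliqueT.image (fun zz => ci s(tF, zz))) ∪ (cliqueT.image (fun zz => ci s(mF, zz))))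
      have h2 := Finset.card_union_le (cliqueT.image (fun zz => ci s(tF, zz)))
        (cliqueT.image (fun zz => ci s(mF, zz)))
      have h3 := Finset.card_image_le (s := cliqueT) (f := fun zz => ci s(tF, zz))
      have h4 := Finset.card_image_le (s := cliqueT) (f := fun zz => ci s(mF, zz))
      rw [hcliq_card] at h3 h4
      rw [hCdef]
      omega
    -- bad clique edges
    set B : Finset (Sym2 (Fin n)) :=
      Finset.univ.filter (fun q : Sym2 (Fin n) => q ∈ G.edgeSet ∧ c q ∈ Cbad) with hBdef
    have hBcard : B.card ≤ 2 * p + 1 := by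
      refine le_trans (Finset.card_le_card_of_injOn c ?_ ?_) hCcard
      · intro q hq
        rw [Finset.mem_coe, hBdef, Finset.mem_filter] at hq
        exact hq.2.2
      · intro q1 hq1 q2 hq2 hcc
        rw [Finset.mem_coe, hBdef, Finset.mem_filter] at hq1 hq2
        exact hc q1 hq1.2.1 q2 hq2.2.1 hcc
    have hBedge : ∀ q ∈ B, (cliqueT.filter (fun w => w ∈ q)).card = 2 := by
      intro q hq
      rw [hBdef, Finset.mem_filter] at hq
      obtain ⟨-, hqe, -⟩ := hq
      revert hqe
      induction q with
      | _ a b =>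
        intro hqe
        obtain ⟨hne, ha, hb⟩ := (hGadj a b).1 ((SimpleGraph.mem_edgeSet G).1 hqe)
        have hset : cliqueT.filter (fun w => w ∈ s(a, b)) = {a, b} := by
          ext w
          simp only [Finset.mem_filter, hmem_cT, Sym2.mem_iff, Finset.mem_insert,
            Finset.mem_singleton, hcTdef, Finset.mem_univ, true_and]
          constructor
          · rintro ⟨_, h | h⟩
            · exact Or.inl h
            · exact Or.inr h
          · rintro (rfl | rfl)
            · exact ⟨ha, Or.inl rfl⟩
            · exact ⟨hb, Or.inr rfl⟩
        rw [hset, Finset.card_pair hne]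
    obtain ⟨wv, hwvp, hwvB⟩ : ∃ wv : Fin n, (wv : ℕ) < p ∧
        (B.filter (fun q => wv ∉ q)).card ≤ 2 * F + 1 := by
      by_cases hBs : B.card ≤ 2 * F + 1
      · exact ⟨⟨0, by omega⟩, by simpa using (by omega : 0 < p),
          le_trans (Finset.card_filter_le _ _) hBs⟩
      · push_neg at hBs
        have hsum : ∑ w ∈ cliqueT, (B.filter (fun q => w ∈ q)).card = 2 * B.card := by
          have h1 : ∀ w, (B.filter (fun q => w ∈ q)).card =
              ∑ q ∈ B, if w ∈ q then 1 else 0 := fun w => Finset.card_filter _ _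
          rw [Finset.sum_congr rfl (fun w _ => h1 w), Finset.sum_comm]
          rw [Finset.sum_congr rfl (fun q hq => ?_)]
          · rw [Finset.sum_const, smul_eq_mul, mul_comm]
          · rw [← Finset.card_filter]
            exact hBedge q hq
        obtain ⟨w0, hw0T, hw02⟩ : ∃ w0 ∈ cliqueT, 2 ≤ (B.filter (fun q => w0 ∈ q)).card := by
          by_contra hcon
          push_neg at hcon
          have hbound : ∑ w ∈ cliqueT, (B.filter (fun q => w ∈ q)).card ≤ cliqueT.card * 1 := by
            apply Finset.sum_le_card_nsmul
            intro w hw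
            have := hcon w hw
            omega
          rw [hsum, hcliq_card] at hbound
          omega
        refine ⟨w0, (hmem_cT w0).1 hw0T, ?_⟩
        have hsplit : (B.filter (fun q => w0 ∈ q)).card +
            (B.filter (fun q => w0 ∉ q)).card = B.card :=
          Finset.card_filter_add_card_filter_not (p := fun q => w0 ∈ q)
        omega
    -- the host injection
    have hFn : F < n := by omega
    set ι : Fin F → Fin n := fun j =>
      if (j : ℕ) < (wv : ℕ) then ⟨(j : ℕ), by have := j.isLt; omega⟩
      else ⟨(j : ℕ) + 1, by have := j.isLt; omega⟩ with hιdef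
    have hιlt : ∀ j : Fin F, ((ι j : Fin n) : ℕ) < p := by
      intro j
      have := j.isLt
      rw [hιdef]
      dsimp only
      split <;> simp <;> omega
    have hιwv : ∀ j : Fin F, ι j ≠ wv := by
      intro j
      rw [hιdef]
      dsimp only
      split <;> (intro hcon; have := congrArg Fin.val hcon; simp at this; omega)
    have hιinj : Function.Injective ι := by
      intro j1 j2 hj
      rw [hιdef] at hj
      dsimp only at hj
      have hv := congrArg Fin.val hj
      apply Fin.ext
      split at hv <;> split at hv <;> simp at hv <;> omega
    set Gs : SimpleGraph (Fin F) :=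
      SimpleGraph.fromRel (fun x y => c s(ι x, ι y) ∉ Cbad) with hGsdef
    have hGsadj : ∀ x y : Fin F, Gs.Adj x y → x ≠ y ∧ c s(ι x, ι y) ∉ Cbad := by
      intro x y h
      rw [hGsdef, SimpleGraph.fromRel_adj] at h
      refine ⟨h.1, ?_⟩
      rcases h.2 with h2 | h2
      · exact h2
      · rw [show s(ι x, ι y) = s(ι y, ι x) from Sym2.eq_swap]
        exact h2
    have hGscard : ((F.choose 2 : ℤ) - 2 * F - 2) < (Gs.edgeSet.ncard : ℤ) := by
      classical
      have hinjc : ((⊤ : SimpleGraph (Fin F)).edgeFinset \ Gs.edgeFinset).card ≤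
          (B.filter (fun q => wv ∉ q)).card := by
        apply Finset.card_le_card_of_injOn (Sym2.map ι)
        · intro q hq
          rw [Finset.mem_coe, Finset.mem_sdiff, SimpleGraph.mem_edgeFinset, SimpleGraph.mem_edgeFinset] at hq
          revert hq
          induction q with
          | _ x y =>
            rintro ⟨htop, hns⟩
            have hxy : x ≠ y := ((SimpleGraph.mem_edgeSet _).1 htop).ne
            have hbad : c s(ι x, ι y) ∈ Cbad := by
              by_contra hnb
              exact hns ((SimpleGraph.mem_edgeSet _).2
                (by rw [hGsdef, SimpleGraph.fromRel_adj]; exact ⟨hxy, Or.inl hnb⟩))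
            rw [Sym2.map_pair_eq, Finset.mem_coe, Finset.mem_filter, hBdef, Finset.mem_filter]
            refine ⟨⟨Finset.mem_univ _,
              hGedge _ _ (fun h => hxy (hιinj h)) (hιlt x) (hιlt y), hbad⟩, ?_⟩
            rw [Sym2.mem_iff]
            rintro (h | h) <;> exact hιwv _ h.symm
        · exact (Sym2.map.injective hιinj).injOn
      have htopc : (⊤ : SimpleGraph (Fin F)).edgeFinset.card = F.choose 2 := by
        rw [SimpleGraph.card_edgeFinset_top_eq_card_choose_two, Fintype.card_fin]
      have hsub : Gs.edgeFinset ⊆ (⊤ : SimpleGraph (Fin F)).edgeFinset :=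
        SimpleGraph.edgeFinset_mono le_top
      have hsd : ((⊤ : SimpleGraph (Fin F)).edgeFinset \ Gs.edgeFinset).card =
          F.choose 2 - Gs.edgeFinset.card := by
        rw [Finset.card_sdiff_of_subset hsub, htopc]
      have hncard : Gs.edgeSet.ncard = Gs.edgeFinset.card := Set.ncard_eq_toFinset_card' _
      have hlec : Gs.edgeFinset.card ≤ F.choose 2 := by
        rw [← htopc]
        exact Finset.card_le_card hsub
      have hkey : F.choose 2 ≤ Gs.edgeFinset.card + (2 * F + 1) := by omega
      rw [hncard]
      have h1 : (F.choose 2 : ℤ) ≤ (Gs.edgeFinset.card : ℤ) + (2 * F + 1) := by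
        exact_mod_cast hkey
      omega
    obtain ⟨aW, bW, hab, ψ, hψinj, hψadj⟩ :=
      contains_of_dense_of_cond H hcondF Gs hGscard
    have hmemab : ∀ x : W, x ≠ aW → x ≠ bW → x ∈ ({aW, bW}ᶜ : Set W) := by
      intro x hxa hxb
      simp [hxa, hxb]
    set φ : W → Fin n := fun x =>
      if hxa : x = aW then tF else if hxb : x = bW then mF
      else ι (ψ ⟨x, hmemab x hxa hxb⟩) with hφdef
    have hφa : φ aW = tF := by rw [hφdef]; simp
    have hφb : φ bW = mF := by
      rw [hφdef]
      dsimp only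
      rw [dif_neg (Ne.symm hab.ne), dif_pos rfl]
    have hφoth : ∀ x (hxa : x ≠ aW) (hxb : x ≠ bW),
        φ x = ι (ψ ⟨x, hmemab x hxa hxb⟩) := by
      intro x hxa hxb
      rw [hφdef]
      dsimp only
      rw [dif_neg hxa, dif_neg hxb]
    have hφcases : ∀ x : W, (x = aW ∧ φ x = tF) ∨ (x = bW ∧ φ x = mF) ∨
        (x ≠ aW ∧ x ≠ bW ∧ (φ x : ℕ) < p) := by
      intro x
      by_cases hxa : x = aW
      · exact Or.inl ⟨hxa, by rw [hxa, hφa]⟩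
      · by_cases hxb : x = bW
        · exact Or.inr (Or.inl ⟨hxb, by rw [hxb, hφb]⟩)
        · refine Or.inr (Or.inr ⟨hxa, hxb, ?_⟩)
          rw [hφoth x hxa hxb]
          exact hιlt _
    have hφinj : Function.Injective φ := by
      intro x y hxy
      rcases hφcases x with ⟨hx1, hx2⟩ | ⟨hx1, hx2⟩ | ⟨hx1, hx1', hx2⟩ <;>
        rcases hφcases y with ⟨hy1, hy2⟩ | ⟨hy1, hy2⟩ | ⟨hy1, hy1', hy2⟩
      · rw [hx1, hy1]
      · exfalso
        rw [hx2, hy2] at hxy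
        have := congrArg Fin.val hxy
        omega
      · exfalso
        rw [hx2] at hxy
        rw [← hxy] at hy2
        omega
      · exfalso
        rw [hx2, hy2] at hxy
        have := congrArg Fin.val hxy
        omega
      · rw [hx1, hy1]
      · exfalso
        rw [hx2] at hxy
        rw [← hxy] at hy2
        omega
      · exfalso
        rw [hy2] at hxy
        rw [hxy] at hx2
        omega
      · exfalso
        rw [hy2] at hxy
        rw [hxy] at hx2
        omega
      · rw [hφoth x hx1 hx1', hφoth y hy1 hy1'] at hxy
        have h5 := hψinj (hιinj hxy)
        exact congrArg Subtype.val h5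
    have hψG : ∀ (x y : W) (hxa : x ≠ aW) (hxb : x ≠ bW) (hya : y ≠ aW) (hyb : y ≠ bW),
        H.Adj x y → Gs.Adj (ψ ⟨x, hmemab x hxa hxb⟩) (ψ ⟨y, hmemab y hya hyb⟩) := by
      intro x y hxa hxb hya hyb hxy
      exact hψadj hxy
    have hφadj : ∀ ⦃x y : W⦄, H.Adj x y →
        (G ⊔ SimpleGraph.fromEdgeSet {e | e ∈ L.take k}).Adj (φ x) (φ y) := by
      intro x y hxy
      have hmtne : mF ≠ tF := fun hcon => by
        have := congrArg Fin.val hcon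
        omega
      have htmne : tF ≠ mF := Ne.symm hmtne
      by_cases hxa : x = aW
      · by_cases hyb : y = bW
        · rw [hxa, hyb, hφa, hφb]
          apply hAdj_tk _ _ htmne
          rw [show s(tF, mF) = s(mF, tF) from Sym2.eq_swap, ← heq']
          exact he_take
        · have hya : y ≠ aW := fun hcon => hxy.ne (hxa.trans hcon.symm)
          rw [hxa, hφa, hφoth y hya hyb]
          have hlt := hιlt (ψ ⟨y, hmemab y hya hyb⟩)
          apply hAdj_tk _ _ (fun hcon => by
            have := congrArg Fin.val hcon
            omega)
          exact hstar_t _ hlt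
      · by_cases hxb : x = bW
        · by_cases hya : y = aW
          · rw [hxb, hya, hφa, hφb]
            apply hAdj_tk _ _ hmtne
            rw [← heq']
            exact he_take
          · have hyb : y ≠ bW := fun hcon => hxy.ne (hxb.trans hcon.symm)
            rw [hxb, hφb, hφoth y hya hyb]
            have hlt := hιlt (ψ ⟨y, hmemab y hya hyb⟩)
            apply hAdj_tk _ _ (fun hcon => by
              have := congrArg Fin.val hcon
              omega)
            exact hstar_m _ hlt
        · by_cases hya : y = aW
          · rw [hya, hφa, hφoth x hxa hxb]
            have hlt := hιlt (ψ ⟨x, hmemab x hxa hxb⟩)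
            have hne2 : (ι (ψ ⟨x, hmemab x hxa hxb⟩)) ≠ tF := fun hcon => by
              have := congrArg Fin.val hcon
              omega
            have hmem2 : s(ι (ψ ⟨x, hmemab x hxa hxb⟩), tF) ∈ L.take k := by
              rw [show s(ι (ψ ⟨x, hmemab x hxa hxb⟩), tF) =
                s(tF, ι (ψ ⟨x, hmemab x hxa hxb⟩)) from Sym2.eq_swap]
              exact hstar_t _ hlt
            exact hAdj_tk _ _ hne2 hmem2
          · by_cases hyb : y = bW
            · rw [hyb, hφb, hφoth x hxa hxb]
              have hlt := hιlt (ψ ⟨x, hmemab x hxa hxb⟩)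
              have hne2 : (ι (ψ ⟨x, hmemab x hxa hxb⟩)) ≠ mF := fun hcon => by
                have := congrArg Fin.val hcon
                omega
              have hmem2 : s(ι (ψ ⟨x, hmemab x hxa hxb⟩), mF) ∈ L.take k := by
                rw [show s(ι (ψ ⟨x, hmemab x hxa hxb⟩), mF) =
                  s(mF, ι (ψ ⟨x, hmemab x hxa hxb⟩)) from Sym2.eq_swap]
                exact hstar_m _ hlt
              exact hAdj_tk _ _ hne2 hmem2
            · rw [hφoth x hxa hxb, hφoth y hya hyb]
              have hGs := hGsadj _ _ (hψG x y hxa hxb hya hyb hxy)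
              exact hAdj_cl _ _ (fun h => hGs.1 (hιinj h)) (hιlt _) (hιlt _)
    have hclass : ∀ x y : W, H.Adj x y →
        (s(φ x, φ y) ∈ L.take k ∧ ci s(φ x, φ y) ∈ Cbad) ∨
        (s(φ x, φ y) ∈ G.edgeSet ∧ ci s(φ x, φ y) = c s(φ x, φ y) ∧
          c s(φ x, φ y) ∉ Cbad) := by
      intro x y hxy
      by_cases hxa : x = aW
      · by_cases hyb : y = bW
        · left
          rw [hxa, hyb, hφa, hφb]
          constructor
          · rw [show s(tF, mF) = s(mF, tF) from Sym2.eq_swap, ← heq']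
            exact he_take
          · rw [show s(tF, mF) = s(mF, tF) from Sym2.eq_swap, ← heq', hci_e]
            rw [hCdef]
            exact Finset.mem_insert_self _ _
        · have hya : y ≠ aW := fun hcon => hxy.ne (hxa.trans hcon.symm)
          left
          rw [hxa, hφa, hφoth y hya hyb]
          have hlt := hιlt (ψ ⟨y, hmemab y hya hyb⟩)
          refine ⟨hstar_t _ hlt, ?_⟩
          rw [hCdef]
          apply Finset.mem_insert_of_mem
          apply Finset.mem_union_left
          exact Finset.mem_image.2 ⟨_, (hmem_cT _).2 hlt, rfl⟩
      · by_cases hxb : x = bW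
        · by_cases hya : y = aW
          · left
            rw [hxb, hya, hφa, hφb, ← heq']
            exact ⟨he_take, by rw [hci_e, hCdef]; exact Finset.mem_insert_self _ _⟩
          · have hyb : y ≠ bW := fun hcon => hxy.ne (hxb.trans hcon.symm)
            left
            rw [hxb, hφb, hφoth y hya hyb]
            have hlt := hιlt (ψ ⟨y, hmemab y hya hyb⟩)
            refine ⟨hstar_m _ hlt, ?_⟩
            rw [hCdef]
            apply Finset.mem_insert_of_mem
            apply Finset.mem_union_right
            exact Finset.mem_image.2 ⟨_, (hmem_cT _).2 hlt, rfl⟩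
        · by_cases hya : y = aW
          · left
            rw [hya, hφa, hφoth x hxa hxb]
            have hlt := hιlt (ψ ⟨x, hmemab x hxa hxb⟩)
            rw [show s(ι (ψ ⟨x, hmemab x hxa hxb⟩), tF) =
              s(tF, ι (ψ ⟨x, hmemab x hxa hxb⟩)) from Sym2.eq_swap]
            refine ⟨hstar_t _ hlt, ?_⟩
            rw [hCdef]
            apply Finset.mem_insert_of_mem
            apply Finset.mem_union_left
            exact Finset.mem_image.2 ⟨_, (hmem_cT _).2 hlt, rfl⟩
          · by_cases hyb : y = bW
            · left
              rw [hyb, hφb, hφoth x hxa hxb]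
              have hlt := hιlt (ψ ⟨x, hmemab x hxa hxb⟩)
              rw [show s(ι (ψ ⟨x, hmemab x hxa hxb⟩), mF) =
                s(mF, ι (ψ ⟨x, hmemab x hxa hxb⟩)) from Sym2.eq_swap]
              refine ⟨hstar_m _ hlt, ?_⟩
              rw [hCdef]
              apply Finset.mem_insert_of_mem
              apply Finset.mem_union_right
              exact Finset.mem_image.2 ⟨_, (hmem_cT _).2 hlt, rfl⟩
            · right
              rw [hφoth x hxa hxb, hφoth y hya hyb]
              have hGs := hGsadj _ _ (hψG x y hxa hxb hya hyb hxy)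
              have hne3 : ι (ψ ⟨x, hmemab x hxa hxb⟩) ≠ ι (ψ ⟨y, hmemab y hya hyb⟩) :=
                fun h => hGs.1 (hιinj h)
              refine ⟨hGedge _ _ hne3 (hιlt _) (hιlt _), ?_, hGs.2⟩
              exact hci_not _ (hclnL _ _ (hιlt _) (hιlt _))
    have hrain : ∀ ⦃x y x' y' : W⦄, H.Adj x y → H.Adj x' y' →
        ci s(φ x, φ y) = ci s(φ x', φ y') → s(x, y) = s(x', y') := by
      intro x y x' y' h1 h2 hcol
      have himg : s(φ x, φ y) = s(φ x', φ y') := by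
        rcases hclass x y h1 with ⟨ht1, hb1⟩ | ⟨hg1, he1, hnb1⟩ <;>
          rcases hclass x' y' h2 with ⟨ht2, hb2⟩ | ⟨hg2, he2, hnb2⟩
        · exact hci_inj _ ht1 _ ht2 hcol
        · exfalso
          rw [he2] at hcol
          rw [hcol] at hb1
          exact hnb2 hb1
        · exfalso
          rw [he1] at hcol
          rw [← hcol] at hb2
          exact hnb1 hb2
        · rw [he1, he2] at hcol
          exact hc _ hg1 _ hg2 hcol
      rw [← Sym2.map_pair_eq, ← Sym2.map_pair_eq] at himg
      exact Sym2.map.injective hφinj himg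
    refine ⟨φ, hφinj, hφadj, hrain, aW, bW, hab, ?_⟩
    rw [hφa, hφb, heq']
    exact Sym2.eq_swap


/-- If the non-empty graph `H` has a pendant edge and `n > f(H) + 1`, then
`rwsat(n, H) ≤ C(f(H)+1, 2)`; moreover, this bound is witnessed by the `n`-vertex
graph consisting of a rainbow clique on `f(H) + 1` vertices together with
`n - f(H) - 1` isolated vertices, which is weakly `H`-rainbow saturated. -/
theorem rwsat_le_of_pendant {W : Type*} [Fintype W] (H : SimpleGraph W)
    (hH : H.edgeSet.Nonempty)
    (hpend : ∃ u v, H.Adj u v ∧ (H.neighborSet v).ncard = 1)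
    (n : ℕ) (hn : fH H + 1 < n) :
    rwsat H n ≤ (fH H + 1).choose 2 ∧
    ∀ c : Sym2 (Fin n) → ℕ,
      RainbowOn c (SimpleGraph.fromRel
        (fun i j : Fin n => (i : ℕ) < fH H + 1 ∧ (j : ℕ) < fH H + 1)).edgeSet →
      WeaklyRainbowSat H
        (SimpleGraph.fromRel
          (fun i j : Fin n => (i : ℕ) < fH H + 1 ∧ (j : ℕ) < fH H + 1)) c := by
  classical
  obtain ⟨u, v, hadj, hv1⟩ := hpend
  have huv : u ≠ v := hadj.ne
  have hNv : H.neighborSet v = {u} := by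
    obtain ⟨w, hw⟩ := Set.ncard_eq_one.1 hv1
    have hu : u ∈ H.neighborSet v := hadj.symm
    rw [hw] at hu ⊢
    rw [Set.mem_singleton_iff] at hu
    rw [hu]
  have hr2 : 2 ≤ Fintype.card W := Fintype.one_lt_card_iff_nontrivial.2 ⟨⟨u, v, huv⟩⟩
  have hfHmem : fH H ∈ {n | ∀ N ∈ ({n - 1, n} : Set ℕ),
      (exFam H N : ℤ) ≤ (N.choose 2 : ℤ) - 2 * N - 2} :=
    Nat.sInf_mem (fH_set_nonempty H ⟨u, v, hadj, hv1⟩)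
  set F := fH H with hFdef
  have hcondF : (exFam H F : ℤ) ≤ (F.choose 2 : ℤ) - 2 * F - 2 :=
    hfHmem F (Or.inr rfl)
  have hcondF1 : (exFam H (F - 1) : ℤ) ≤ ((F - 1).choose 2 : ℤ) - 2 * ((F - 1 : ℕ) : ℤ) - 2 :=
    hfHmem (F - 1) (Or.inl rfl)
  have hF1 : 1 ≤ F := by
    by_contra hcon
    push_neg at hcon
    have hF0 : F = 0 := by omega
    rw [hF0] at hcondF
    norm_num at hcondF
    have h0 : (0 : ℤ) ≤ (exFam H 0 : ℤ) := Int.ofNat_nonneg _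
    linarith
  have hrp : Fintype.card W ≤ F + 1 := by
    by_contra hcon
    push_neg at hcon
    have hsm : F - 1 < Fintype.card W - 2 := by omega
    rw [exFam_eq_of_small H ⟨u, v, hadj, hv1⟩ _ hsm] at hcondF1
    have h0 : (0 : ℤ) ≤ ((F - 1 : ℕ) : ℤ) := Int.ofNat_nonneg _
    linarith
  have hwrs : ∀ c : Sym2 (Fin n) → ℕ,
      RainbowOn c (SimpleGraph.fromRel
        (fun i j : Fin n => (i : ℕ) < F + 1 ∧ (j : ℕ) < F + 1)).edgeSet →
      WeaklyRainbowSat H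
        (SimpleGraph.fromRel
          (fun i j : Fin n => (i : ℕ) < F + 1 ∧ (j : ℕ) < F + 1)) c :=
    fun c hc => weakly_sat_clique H hadj hNv n (F + 1) F rfl hcondF hrp hr2 hn c hc
  refine ⟨?_, hwrs⟩
  set c0 : Sym2 (Fin n) → ℕ := fun q => ((Fintype.equivFin (Sym2 (Fin n))) q : ℕ)
    with hc0def
  have hc0inj : Function.Injective c0 := by
    intro q1 q2 h
    rw [hc0def] at h
    exact (Fintype.equivFin _).injective (Fin.val_injective h)
  have hc0rb : RainbowOn c0 (SimpleGraph.fromRel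
      (fun i j : Fin n => (i : ℕ) < F + 1 ∧ (j : ℕ) < F + 1)).edgeSet :=
    fun e1 _ e2 _ h => hc0inj h
  have hpn' : F + 1 ≤ n := le_of_lt hn
  have hcount : (SimpleGraph.fromRel
      (fun i j : Fin n => (i : ℕ) < F + 1 ∧ (j : ℕ) < F + 1)).edgeSet.ncard =
      (F + 1).choose 2 := by
    set Gg := SimpleGraph.fromRel
      (fun i j : Fin n => (i : ℕ) < F + 1 ∧ (j : ℕ) < F + 1) with hGgdef
    rw [Set.ncard_eq_toFinset_card' _]
    have himg : Gg.edgeSet.toFinset =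
        Finset.image (Sym2.map (Fin.castLE hpn'))
          (⊤ : SimpleGraph (Fin (F + 1))).edgeFinset := by
      ext q
      rw [Set.mem_toFinset]
      constructor
      · intro hq
        revert hq
        induction q with
        | _ a b =>
          intro hq
          rw [SimpleGraph.mem_edgeSet, hGgdef, SimpleGraph.fromRel_adj] at hq
          obtain ⟨hne, hor⟩ := hq
          have hab : (a : ℕ) < F + 1 ∧ (b : ℕ) < F + 1 := by
            rcases hor with h | h
            · exact h
            · exact ⟨h.2, h.1⟩
          refine Finset.mem_image.2 ⟨s(⟨(a : ℕ), hab.1⟩, ⟨(b : ℕ), hab.2⟩), ?_, ?_⟩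
          · rw [SimpleGraph.mem_edgeFinset, SimpleGraph.mem_edgeSet, SimpleGraph.top_adj]
            intro hcon
            apply hne
            have := congrArg Fin.val hcon
            exact Fin.val_injective this
          · rw [Sym2.map_pair_eq]
            congr 1 <;> (apply Fin.ext; simp [Fin.castLE])
      · intro hq
        obtain ⟨q0, hq0, rfl⟩ := Finset.mem_image.1 hq
        revert hq0
        induction q0 with
        | _ x y =>
          intro hq0
          rw [SimpleGraph.mem_edgeFinset, SimpleGraph.mem_edgeSet,
            SimpleGraph.top_adj] at hq0
          rw [Sym2.map_pair_eq, SimpleGraph.mem_edgeSet, hGgdef,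
            SimpleGraph.fromRel_adj]
          refine ⟨fun hcon => hq0 (Fin.castLE_injective _ hcon), Or.inl ⟨?_, ?_⟩⟩
          · exact x.isLt
          · exact y.isLt
    rw [himg, Finset.card_image_of_injective _
        (Sym2.map.injective (Fin.castLE_injective _)),
      SimpleGraph.card_edgeFinset_top_eq_card_choose_two, Fintype.card_fin]
  have hmem : (F + 1).choose 2 ∈ ({m | ∃ (G : SimpleGraph (Fin n))
      (c : Sym2 (Fin n) → ℕ), WeaklyRainbowSat H G c ∧ G.edgeSet.ncard = m} ∪
      {n.choose 2} : Set ℕ) :=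
    Or.inl ⟨_, c0, hwrs c0 hc0rb, hcount⟩
  exact Nat.sInf_le hmem
end

section
/- For every integer r ≥ 3 and every integer n > r, rwsat(n, K_r) ≤ (r−1)(n−r) + C(r,2), where K_r is the complete graph on r vertices. -/
open SimpleGraph

def myG (r n : ℕ) : SimpleGraph (Fin n) where
  Adj a b := a ≠ b ∧ (a.val < r - 1 ∨ b.val < r - 1)
  symm := ⟨fun a b h => ⟨h.1.symm, h.2.symm⟩⟩
  loopless := ⟨fun a h => h.1 rfl⟩

instance (r n : ℕ) : DecidableRel (myG r n).Adj := fun _ _ =>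
  inferInstanceAs (Decidable (_ ∧ _))

lemma myG_adj {r n : ℕ} {a b : Fin n} :
    (myG r n).Adj a b ↔ a ≠ b ∧ (a.val < r - 1 ∨ b.val < r - 1) := Iff.rfl

lemma foldl_update_ne {α β : Type*} [DecidableEq α] (ps : List (α × β)) (c : α → β) (e : α)
    (h : ∀ p ∈ ps, p.1 ≠ e) :
    ps.foldl (fun c' p => Function.update c' p.1 p.2) c e = c e := by
  induction ps generalizing c with
  | nil => rfl
  | cons p ps ih =>
    rw [List.foldl_cons, ih _ (fun q hq => h q (List.mem_cons_of_mem _ hq)),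
      Function.update_of_ne (Ne.symm (h p List.mem_cons_self))]

lemma card_filter_val_lt (n k : ℕ) (h : k ≤ n) :
    (Finset.univ.filter (fun w : Fin n => w.val < k)).card = k := by
  have he : Finset.univ.filter (fun w : Fin n => w.val < k) =
      (Finset.range k).attachFin (fun m hm => lt_of_lt_of_le (Finset.mem_range.mp hm) h) := by
    ext a
    simp [Finset.mem_attachFin, Finset.mem_range]
  rw [he, Finset.card_attachFin, Finset.card_range]

lemma myG_card (r n : ℕ) (hr : 3 ≤ r) (hn : r < n) :
    (myG r n).edgeSet.ncard = (r - 1) * (n - r) + r.choose 2 := by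
  classical
  have hfin : (myG r n).edgeSet.ncard = (myG r n).edgeFinset.card := by
    rw [SimpleGraph.edgeFinset, ← Set.ncard_coe_finset, Set.coe_toFinset]
  have hsum : ∑ v, (myG r n).degree v = 2 * (myG r n).edgeFinset.card :=
    SimpleGraph.sum_degrees_eq_twice_card_edges _
  have hdeg1 : ∀ v : Fin n, v.val < r - 1 → (myG r n).degree v = n - 1 := by
    intro v hv
    rw [SimpleGraph.degree, SimpleGraph.neighborFinset_eq_filter]
    have : Finset.univ.filter (fun w => (myG r n).Adj v w) =
        Finset.univ.filter (fun w => w ≠ v) := by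
      apply Finset.filter_congr
      intro w _
      simp only [myG, eq_iff_iff]
      constructor
      · rintro ⟨h1, _⟩ rfl; exact h1 rfl
      · intro h1; exact ⟨fun h2 => h1 h2.symm, Or.inl hv⟩
    rw [this, Finset.filter_ne', Finset.card_erase_of_mem (Finset.mem_univ v),
      Finset.card_univ, Fintype.card_fin]
  have hdeg2 : ∀ v : Fin n, ¬ v.val < r - 1 → (myG r n).degree v = r - 1 := by
    intro v hv
    rw [SimpleGraph.degree, SimpleGraph.neighborFinset_eq_filter]
    have : Finset.univ.filter (fun w => (myG r n).Adj v w) =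
        Finset.univ.filter (fun w : Fin n => w.val < r - 1) := by
      apply Finset.filter_congr
      intro w _
      simp only [myG, eq_iff_iff]
      constructor
      · rintro ⟨_, h2 | h2⟩
        · exact absurd h2 hv
        · exact h2
      · intro h1
        refine ⟨fun h2 => hv ?_, Or.inr h1⟩
        subst h2; exact h1
    rw [this, card_filter_val_lt _ _ (by omega)]
  have hsplit : ∑ v, (myG r n).degree v = (r - 1) * (n - 1) + (n - (r - 1)) * (r - 1) := by
    rw [← Finset.sum_filter_add_sum_filter_not Finset.univ (fun v : Fin n => v.val < r - 1)]
    rw [Finset.sum_congr rfl (fun v hv => hdeg1 v (Finset.mem_filter.mp hv).2),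
      Finset.sum_congr rfl (fun v hv => hdeg2 v (Finset.mem_filter.mp hv).2),
      Finset.sum_const, Finset.sum_const, card_filter_val_lt _ _ (by omega),
      Finset.filter_not, Finset.card_sdiff_of_subset (Finset.filter_subset _ _),
      card_filter_val_lt _ _ (by omega), Finset.card_univ, Fintype.card_fin, smul_eq_mul, smul_eq_mul]
  rw [hfin]
  have hc2 : r.choose 2 * 2 = r * (r - 1) := by
    rw [Nat.choose_two_right]
    refine Nat.div_mul_cancel ?_
    have := (Nat.even_mul_succ_self (r - 1)).two_dvd
    have hr1 : r - 1 + 1 = r := by omega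
    rw [hr1] at this
    rwa [mul_comm]
  obtain ⟨a, rfl⟩ : ∃ a, r = a + 3 := ⟨r - 3, by omega⟩
  obtain ⟨b, rfl⟩ : ∃ b, n = a + 3 + (b + 1) := ⟨n - (a + 3) - 1, by omega⟩
  have e1 : a + 3 - 1 = a + 2 := by omega
  have e2 : a + 3 + (b + 1) - 1 = a + b + 3 := by omega
  have e3 : a + 3 + (b + 1) - (a + 2) = b + 2 := by omega
  have e4 : a + 3 + (b + 1) - (a + 3) = b + 1 := by omega
  rw [e1, e2, e3] at hsplit
  rw [e1, e4]
  rw [e1] at hc2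
  rw [hsplit] at hsum
  have key : (a + 2) * (a + b + 3) + (b + 2) * (a + 2)
      = 2 * ((a + 2) * (b + 1)) + (a + 3) * (a + 2) := by ring
  linarith [hsum, hc2, key]

theorem myG_wrs (r n : ℕ) (hr : 3 ≤ r) (hn : r < n) (φ : Sym2 (Fin n) ↪ ℕ) :
    WeaklyRainbowSat (⊤ : SimpleGraph (Fin r)) (myG r n) (fun e => φ e) := by
  classical
  set G := myG r n with hGdef
  set L := Gᶜ.edgeFinset.toList with hL
  have hmemL : ∀ e, e ∈ L ↔ e ∈ Gᶜ.edgeSet := fun e =>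
    (Finset.mem_toList).trans mem_edgeFinset
  refine ⟨L, Finset.nodup_toList _, hmemL, ?_⟩
  intro cs hlen hnd i
  have hex : ∀ e : Sym2 (Fin n), ∃ u v, e = s(u, v) := fun e =>
    Sym2.ind (fun x y => ⟨x, y, rfl⟩) e
  obtain ⟨u, v, he⟩ := hex (L.get i)
  have heS : L.get i ∈ Gᶜ.edgeSet := (hmemL _).mp (L.get_mem i)
  rw [he] at heS
  have huv : Gᶜ.Adj u v := heS
  rw [compl_adj] at huv
  obtain ⟨hne, hnadj⟩ := huv
  have hu : ¬ u.val < r - 1 ∧ ¬ v.val < r - 1 := by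
    rw [hGdef, myG_adj] at hnadj
    push_neg at hnadj
    have := hnadj hne
    omega
  obtain ⟨hu1, hv1⟩ := hu
  have hlt : (i : ℕ) < cs.length := by rw [hlen]; exact i.isLt
  set x := cs.get ⟨i, hlt⟩ with hx
  -- choice of the avoided clique vertex
  have hw0ex : ∃ w0 : Fin n, w0.val < r - 1 ∧
      ∀ y z : Fin n, (y.val < r - 1 ∨ z.val < r - 1) → y ≠ w0 → z ≠ w0 →
        φ s(y, z) ≠ x := by
    have h0 : (0 : ℕ) < n := by omega
    by_cases hxe : ∃ e0, φ e0 = x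
    · obtain ⟨e0, he0⟩ := hxe
      obtain ⟨p, q, rfl⟩ := hex e0
      by_cases hp : p.val < r - 1
      · refine ⟨p, hp, fun y z hyz hy hz hc => ?_⟩
        have : s(y, z) = s(p, q) := φ.injective (hc.trans he0.symm)
        rw [Sym2.eq_iff] at this
        rcases this with ⟨rfl, rfl⟩ | ⟨rfl, rfl⟩
        · exact hy rfl
        · exact hz rfl
      · by_cases hq : q.val < r - 1
        · refine ⟨q, hq, fun y z hyz hy hz hc => ?_⟩
          have : s(y, z) = s(p, q) := φ.injective (hc.trans he0.symm)
          rw [Sym2.eq_iff] at this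
          rcases this with ⟨rfl, rfl⟩ | ⟨rfl, rfl⟩
          · exact hz rfl
          · exact hy rfl
        · refine ⟨⟨0, h0⟩, by simp; omega, fun y z hyz hy hz hc => ?_⟩
          have : s(y, z) = s(p, q) := φ.injective (hc.trans he0.symm)
          rw [Sym2.eq_iff] at this
          rcases this with ⟨rfl, rfl⟩ | ⟨rfl, rfl⟩
          · tauto
          · tauto
    · exact ⟨⟨0, h0⟩, by simp; omega, fun y z _ _ _ hc => hxe ⟨_, hc⟩⟩
  obtain ⟨w0, hw0R, hw0⟩ := hw0ex
  -- the embedding of K_r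
  set f : Fin r → Fin n := fun k =>
    if k.val = 0 then u else if k.val = 1 then v else
      if k.val - 2 < w0.val then ⟨k.val - 2, by have := k.isLt; omega⟩
      else ⟨k.val - 1, by have := k.isLt; omega⟩ with hf
  have hf0 : ∀ k : Fin r, k.val = 0 → f k = u := by
    intro k hk; simp only [hf, if_pos hk]
  have hf1 : ∀ k : Fin r, k.val = 1 → f k = v := by
    intro k hk; simp only [hf]; rw [if_neg (by omega), if_pos hk]
  have hf2 : ∀ k : Fin r, 2 ≤ k.val → (f k).val < r - 1 ∧ f k ≠ w0 ∧
      (((f k).val = k.val - 2 ∧ k.val - 2 < w0.val) ∨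
       ((f k).val = k.val - 1 ∧ w0.val ≤ k.val - 2)) := by
    intro k hk
    have hkr := k.isLt
    simp only [hf]
    rw [if_neg (by omega), if_neg (by omega)]
    split_ifs with h
    · exact ⟨by simpa using by omega, by
        intro hcon
        have : k.val - 2 = w0.val := congrArg Fin.val hcon
        omega, Or.inl ⟨rfl, h⟩⟩
    · refine ⟨by simpa using by omega, ?_, Or.inr ⟨rfl, by omega⟩⟩
      intro hcon
      have : k.val - 1 = w0.val := congrArg Fin.val hcon
      omega
  have hfne_w0 : ∀ k : Fin r, f k ≠ w0 := by
    intro k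
    rcases Nat.lt_or_ge k.val 2 with hk | hk
    · interval_cases h : k.val
      · rw [hf0 k h]; intro hcon; rw [hcon] at hu1; exact hu1 hw0R
      · rw [hf1 k h]; intro hcon; rw [hcon] at hv1; exact hv1 hw0R
    · exact (hf2 k hk).2.1
  have hfinj : Function.Injective f := by
    intro a b hab
    have har := a.isLt
    have hbr := b.isLt
    apply Fin.ext
    by_contra hne'
    rcases Nat.lt_or_ge a.val 2 with ha | ha <;> rcases Nat.lt_or_ge b.val 2 with hb | hb
    · interval_cases h1 : a.val <;> interval_cases h2 : b.val
      · omega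
      · rw [hf0 a h1, hf1 b h2] at hab; exact hne hab
      · rw [hf1 a h1, hf0 b h2] at hab; exact hne hab.symm
      · omega
    · have h2 := (hf2 b hb).1
      interval_cases h1 : a.val
      · rw [hf0 a h1] at hab; rw [← hab] at h2; omega
      · rw [hf1 a h1] at hab; rw [← hab] at h2; omega
    · have h2 := (hf2 a ha).1
      interval_cases h1 : b.val
      · rw [hf0 b h1] at hab; rw [hab] at h2; omega
      · rw [hf1 b h1] at hab; rw [hab] at h2; omega
    · have h2 := (hf2 a ha).2.2
      have h3 := (hf2 b hb).2.2
      have : (f a).val = (f b).val := congrArg Fin.val hab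
      omega
  have hfA : ∀ k : Fin r, 2 ≤ k.val → (f k).val < r - 1 := fun k hk => (hf2 k hk).1
  -- the i-th edge is among the added ones
  have hmem_take : L.get i ∈ L.take ((i : ℕ) + 1) := by
    rw [List.take_succ, List.getElem?_eq_getElem i.isLt]
    exact List.mem_append_right _ (by simp [List.get_eq_getElem])
  -- adjacency
  have hadj : ∀ a b : Fin r, a ≠ b →
      (G ⊔ fromEdgeSet {e | e ∈ L.take ((i : ℕ) + 1)}).Adj (f a) (f b) := by
    intro a b hab
    have har := a.isLt
    have hbr := b.isLt
    have hfab : f a ≠ f b := fun hcon => hab (hfinj hcon)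
    rcases Nat.lt_or_ge a.val 2 with ha | ha <;> rcases Nat.lt_or_ge b.val 2 with hb | hb
    · have hvals : a.val ≠ b.val := fun hcon => hab (Fin.ext hcon)
      interval_cases h1 : a.val <;> interval_cases h2 : b.val
      · omega
      · right
        rw [hf0 a h1, hf1 b h2, fromEdgeSet_adj]
        exact ⟨by rw [Set.mem_setOf_eq, ← he]; exact hmem_take, hne⟩
      · right
        rw [hf1 a h1, hf0 b h2, fromEdgeSet_adj]
        refine ⟨by rw [Set.mem_setOf_eq, Sym2.eq_swap, ← he]; exact hmem_take, hne.symm⟩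
      · omega
    · exact Or.inl ⟨hfab, Or.inr (hfA b hb)⟩
    · exact Or.inl ⟨hfab, Or.inl (hfA a ha)⟩
    · exact Or.inl ⟨hfab, Or.inl (hfA a ha)⟩
  -- the updated coloring
  set c' := (((L.zip cs).take ((i : ℕ) + 1)).foldl
      (fun c' p => Function.update c' p.1 p.2) (fun e => φ e)) with hc'
  have hzlt : (i : ℕ) < (L.zip cs).length := by
    rw [List.length_zip]; omega
  have htake : (L.zip cs).take ((i : ℕ) + 1) =
      (L.zip cs).take (i : ℕ) ++ [(L.get i, x)] := by
    rw [List.take_succ, List.getElem?_eq_getElem hzlt]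
    congr 1
    simp [List.getElem_zip, List.get_eq_getElem, hx]
  have hc'e : c' (L.get i) = x := by
    rw [hc', htake, List.foldl_append, List.foldl_cons, List.foldl_nil,
      Function.update_self]
  have hc'G : ∀ y z : Fin n, G.Adj y z → c' s(y, z) = φ s(y, z) := by
    intro y z hyz
    refine foldl_update_ne _ _ _ ?_
    intro p hp hcon
    have hp1 : p.1 ∈ L := (List.of_mem_zip (List.mem_of_mem_take hp)).1
    have : p.1 ∈ Gᶜ.edgeSet := (hmemL _).mp hp1
    rw [hcon] at this
    exact (compl_adj G y z).mp this |>.2 hyz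
  -- classification of copy edges
  have hclass : ∀ a b : Fin r, a ≠ b →
      s(f a, f b) = s(u, v) ∨ G.Adj (f a) (f b) := by
    intro a b hab
    have har := a.isLt
    have hbr := b.isLt
    have hfab : f a ≠ f b := fun hcon => hab (hfinj hcon)
    rcases Nat.lt_or_ge a.val 2 with ha | ha <;> rcases Nat.lt_or_ge b.val 2 with hb | hb
    · interval_cases h1 : a.val <;> interval_cases h2 : b.val
      · omega
      · left; rw [hf0 a h1, hf1 b h2]
      · left; rw [hf1 a h1, hf0 b h2, Sym2.eq_swap]
      · omega
    · exact Or.inr ⟨hfab, Or.inr (hfA b hb)⟩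
    · exact Or.inr ⟨hfab, Or.inl (hfA a ha)⟩
    · exact Or.inr ⟨hfab, Or.inl (hfA a ha)⟩
  -- G-edges of the copy never have color x
  have hGx : ∀ a b : Fin r, G.Adj (f a) (f b) → φ s(f a, f b) ≠ x := by
    intro a b hab
    exact hw0 (f a) (f b) hab.2 (hfne_w0 a) (hfne_w0 b)
  refine ⟨f, hfinj, ?_, ?_, ?_⟩
  · intro a b hab
    exact hadj a b ((top_adj a b).mp hab)
  · intro a b a' b' hab hab' hcc
    rw [top_adj] at hab hab'
    have key : s(f a, f b) = s(f a', f b') := by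
      rcases hclass a b hab with h1 | h1 <;> rcases hclass a' b' hab' with h2 | h2
      · rw [h1, h2]
      · exfalso
        rw [h1, ← he, hc'e] at hcc
        rw [hc'G _ _ h2] at hcc
        exact hGx a' b' h2 hcc.symm
      · exfalso
        rw [h2, ← he, hc'e] at hcc
        rw [hc'G _ _ h1] at hcc
        exact hGx a b h1 hcc
      · rw [hc'G _ _ h1, hc'G _ _ h2] at hcc
        exact φ.injective hcc
    refine Sym2.map.injective hfinj ?_
    rw [Sym2.map_pair_eq, Sym2.map_pair_eq]
    exact key
  · have h0r : (0 : ℕ) < r := by omega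
    have h1r : (1 : ℕ) < r := by omega
    refine ⟨⟨0, h0r⟩, ⟨1, h1r⟩, ?_, ?_⟩
    · rw [top_adj]
      simp only [ne_eq, Fin.mk.injEq]
      omega
    · rw [hf0 ⟨0, h0r⟩ rfl, hf1 ⟨1, h1r⟩ rfl, he]


/-- For every `r ≥ 3` and `n > r`,
`rwsat(n, K_r) ≤ (r - 1)(n - r) + C(r, 2)`. -/
theorem rwsat_complete_upper (r : ℕ) (hr : 3 ≤ r) (n : ℕ) (hn : r < n) :
    rwsat (⊤ : SimpleGraph (Fin r)) n ≤ (r - 1) * (n - r) + r.choose 2 := by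
  classical
  obtain ⟨φ⟩ := nonempty_embedding_nat (Sym2 (Fin n))
  refine Nat.sInf_le (Or.inl ⟨myG r n, fun e => φ e, myG_wrs r n hr hn φ, myG_card r n hr hn⟩)
end
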